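/- arXiv:1701.03235 — 10 statements merged into one kernel-verified Lean document; each statement's English description precedes it below -/
import Mathlib

section
/- Let T ∈ (0,∞], let a₀, b₀ > 0 and let A₁, A₂, B₁, B₂ be real numbers with A₁ > max(B₁, 0) and B₂ > max(A₂, 0). Let ū, v̄ : [0,T) → ℝ be positive continuously differentiable functions satisfying, for all t ∈ [0,T), ū'(t) ≤ ū(t)·(a₀ − A₁·ū(t) + A₂·v̄(t)) and v̄'(t) ≤ v̄(t)·(b₀ + B₁·ū(t) − B₂·v̄(t)). Set M = max{ū(0)·v̄(0), (a₀+b₀)² / (4·(min(A₁−B₁, B₂−A₂))²)}. Then for all t ∈ [0,T): 0 < ū(t) ≤ max{ū(0), (a₀ + √(a₀² + 4·A₁·(A₂)₊·M)) / (2A₁)} and 0 < v̄(t) ≤ max{v̄(0), (b₀ + √(b₀² + 4·(B₁)₊·B₂·M)) / (2B₂)}. -/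
open Filter Set

lemma barrier_aux {w w' : ℝ → ℝ} {t C : ℝ} (ht : 0 ≤ t)
    (hw : ∀ x ∈ Icc 0 t, HasDerivWithinAt w (w' x) (Icc 0 t) x)
    (h0 : w 0 ≤ C)
    (hneg : ∀ x ∈ Ico 0 t, w x = C → w' x < 0) :
    w t ≤ C := by
  have hcont : ContinuousOn w (Icc 0 t) := fun x hx => (hw x hx).continuousWithinAt
  have := image_le_of_deriv_right_lt_deriv_boundary' (f := w) (f' := w')
    (B := fun _ => C) (B' := fun _ => 0) (a := 0) (b := t) hcont
    (fun x hx => (hw x ⟨hx.1, hx.2.le⟩).mono_of_mem_nhdsWithin (Icc_mem_nhdsGE_of_mem hx))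
    h0 continuousOn_const (fun x _ => hasDerivWithinAt_const x _ C)
    (fun x hx hxC => hneg x hx hxC)
  exact this (right_mem_Icc.2 ht)

lemma quad_neg {a A P K x : ℝ} (ha : 0 < a) (hA : 0 < A) (hP : 0 ≤ P)
    (hK : K = (a + Real.sqrt (a ^ 2 + 4 * A * P)) / (2 * A)) (hx : K < x) :
    a * x - A * x ^ 2 + P < 0 := by
  have harg : (0:ℝ) ≤ a ^ 2 + 4 * A * P := by positivity
  have hD : Real.sqrt (a ^ 2 + 4 * A * P) ^ 2 = a ^ 2 + 4 * A * P := Real.sq_sqrt harg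
  have hD0 : 0 ≤ Real.sqrt (a ^ 2 + 4 * A * P) := Real.sqrt_nonneg _
  have h2 : a + Real.sqrt (a ^ 2 + 4 * A * P) < 2 * A * x := by
    rw [hK, div_lt_iff₀ (by positivity)] at hx
    linarith [hx]
  nlinarith [hD, hD0, sq_nonneg (2 * A * x - a - Real.sqrt (a ^ 2 + 4 * A * P))]

lemma arith_aux {m a b U V Mε : ℝ} (hm : 0 < m) (hU : 0 < U) (hV : 0 < V)
    (hab : 0 < a + b) (hUV : U * V = Mε) (hMε : (a + b) ^ 2 < 4 * m ^ 2 * Mε) :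
    a + b < m * (U + V) := by
  nlinarith [sq_nonneg (U - V), mul_pos hm (add_pos hU hV), sq_nonneg (m * (U + V) - (a + b))]

/-- Single comparison: if `w' ≤ a w - A w² + P` on `S`, then `w ≤ max (w 0) K`. -/
lemma comp_bound (T : ENNReal) {S : Set ℝ}
    (hS : S = {t : ℝ | 0 ≤ t ∧ ENNReal.ofReal t < T})
    {w w' : ℝ → ℝ} {a A P K : ℝ}
    (ha : 0 < a) (hA : 0 < A) (hP : 0 ≤ P)
    (hw : ∀ x ∈ S, HasDerivWithinAt w (w' x) S x)
    (hineq : ∀ x ∈ S, w' x ≤ a * w x - A * (w x) ^ 2 + P)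
    (hK : K = (a + Real.sqrt (a ^ 2 + 4 * A * P)) / (2 * A)) :
    ∀ t ∈ S, w t ≤ max (w 0) K := by
  intro t htS
  have ht0 : 0 ≤ t := by rw [hS] at htS; exact htS.1
  have hsub : Icc 0 t ⊆ S := by
    intro x hx
    rw [hS] at htS ⊢
    exact ⟨hx.1, lt_of_le_of_lt (ENNReal.ofReal_le_ofReal hx.2) htS.2⟩
  have key : ∀ ε > 0, w t ≤ max (w 0) K + ε := by
    intro ε hε
    apply barrier_aux ht0 (fun x hx => (hw x (hsub hx)).mono hsub)
    · linarith [le_max_left (w 0) K]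
    · intro x hx hxC
      have hxS := hsub ⟨hx.1, hx.2.le⟩
      have h1 := hineq x hxS
      have hKlt : K < w x := by rw [hxC]; have := le_max_right (w 0) K; linarith
      have := quad_neg ha hA hP hK hKlt
      linarith
  exact le_of_forall_pos_le_add key

/-- Lemma 2.1: ODE comparison lemma for a coupled pair of differential
inequalities of Lotka–Volterra type. -/
theorem stmt_0 (T : ENNReal) (hT : 0 < T)
    (a₀ b₀ A₁ A₂ B₁ B₂ : ℝ) (ha₀ : 0 < a₀) (hb₀ : 0 < b₀)
    (hA₁ : A₁ > max B₁ 0) (hB₂ : B₂ > max A₂ 0)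
    (S : Set ℝ) (hS : S = {t : ℝ | 0 ≤ t ∧ ENNReal.ofReal t < T})
    (u v u' v' : ℝ → ℝ)
    (hupos : ∀ t ∈ S, 0 < u t) (hvpos : ∀ t ∈ S, 0 < v t)
    (hud : ∀ t ∈ S, HasDerivWithinAt u (u' t) S t)
    (hvd : ∀ t ∈ S, HasDerivWithinAt v (v' t) S t)
    (huc : ContinuousOn u' S) (hvc : ContinuousOn v' S)
    (hui : ∀ t ∈ S, u' t ≤ u t * (a₀ - A₁ * u t + A₂ * v t))
    (hvi : ∀ t ∈ S, v' t ≤ v t * (b₀ + B₁ * u t - B₂ * v t))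
    (M : ℝ)
    (hM : M = max (u 0 * v 0) ((a₀ + b₀) ^ 2 / (4 * (min (A₁ - B₁) (B₂ - A₂)) ^ 2))) :
    ∀ t ∈ S,
      (0 < u t ∧ u t ≤ max (u 0) ((a₀ + Real.sqrt (a₀ ^ 2 + 4 * A₁ * max A₂ 0 * M)) / (2 * A₁)))
      ∧
      (0 < v t ∧ v t ≤ max (v 0) ((b₀ + Real.sqrt (b₀ ^ 2 + 4 * max B₁ 0 * B₂ * M)) / (2 * B₂))) := by
  set m : ℝ := min (A₁ - B₁) (B₂ - A₂) with hm
  have hA₁B₁ : B₁ < A₁ := lt_of_le_of_lt (le_max_left _ _) hA₁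
  have hA₁0 : 0 < A₁ := lt_of_le_of_lt (le_max_right _ _) hA₁
  have hB₂A₂ : A₂ < B₂ := lt_of_le_of_lt (le_max_left _ _) hB₂
  have hB₂0 : 0 < B₂ := lt_of_le_of_lt (le_max_right _ _) hB₂
  have hm0 : 0 < m := lt_min (by linarith) (by linarith)
  have h0S : (0:ℝ) ∈ S := by rw [hS]; exact ⟨le_refl 0, by simpa using hT⟩
  have hu0 : 0 < u 0 := hupos 0 h0S
  have hv0 : 0 < v 0 := hvpos 0 h0S
  have hMuv : u 0 * v 0 ≤ M := hM ▸ le_max_left _ _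
  have hM0 : 0 < M := lt_of_lt_of_le (mul_pos hu0 hv0) hMuv
  have hMq : (a₀ + b₀) ^ 2 ≤ 4 * m ^ 2 * M := by
    have h1 : (a₀ + b₀) ^ 2 / (4 * m ^ 2) ≤ M := hM ▸ le_max_right _ _
    rw [div_le_iff₀ (by positivity)] at h1
    linarith
  -- product bound
  have hprod : ∀ t ∈ S, u t * v t ≤ M := by
    intro t htS
    have ht0 : 0 ≤ t := by rw [hS] at htS; exact htS.1
    have hsub : Icc 0 t ⊆ S := by
      intro x hx
      rw [hS] at htS ⊢
      exact ⟨hx.1, lt_of_le_of_lt (ENNReal.ofReal_le_ofReal hx.2) htS.2⟩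
    have key : ∀ ε > 0, u t * v t ≤ M + ε := by
      intro ε hε
      apply barrier_aux (w := fun x => u x * v x) (w' := fun x => u' x * v x + u x * v' x) ht0
      · exact fun x hx => ((hud x (hsub hx)).mul (hvd x (hsub hx))).mono hsub
      · linarith
      · intro x hx hxC
        have hxS := hsub ⟨hx.1, hx.2.le⟩
        have hU := hupos x hxS; have hV := hvpos x hxS
        have h1 := hui x hxS; have h2 := hvi x hxS
        have hsum : u' x * v x + u x * v' x ≤
            u x * v x * (a₀ + b₀ - (A₁ - B₁) * u x - (B₂ - A₂) * v x) := by
          have e1 : u' x * v x ≤ u x * (a₀ - A₁ * u x + A₂ * v x) * v x :=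
            mul_le_mul_of_nonneg_right h1 hV.le
          have e2 : u x * v' x ≤ u x * (v x * (b₀ + B₁ * u x - B₂ * v x)) :=
            mul_le_mul_of_nonneg_left h2 hU.le
          have e3 : u x * (a₀ - A₁ * u x + A₂ * v x) * v x
              + u x * (v x * (b₀ + B₁ * u x - B₂ * v x))
              = u x * v x * (a₀ + b₀ - (A₁ - B₁) * u x - (B₂ - A₂) * v x) := by ring
          linarith
        have hgt : a₀ + b₀ < m * (u x + v x) :=
          arith_aux hm0 hU hV (by linarith) hxC
            (by nlinarith [mul_pos (mul_pos (by norm_num : (0:ℝ) < 4) (pow_pos hm0 2)) hε])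
        have hco : m * (u x + v x) ≤ (A₁ - B₁) * u x + (B₂ - A₂) * v x := by
          have h3 : m ≤ A₁ - B₁ := min_le_left _ _
          have h4 : m ≤ B₂ - A₂ := min_le_right _ _
          nlinarith
        have : u x * v x * (a₀ + b₀ - (A₁ - B₁) * u x - (B₂ - A₂) * v x) < 0 := by
          apply mul_neg_of_pos_of_neg (mul_pos hU hV); linarith
        calc u' x * v x + u x * v' x ≤ _ := hsum
          _ < 0 := this
    exact le_of_forall_pos_le_add key
  -- bound for u
  have hPu : (0:ℝ) ≤ max A₂ 0 * M := mul_nonneg (le_max_right _ _) hM0.le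
  have hubd : ∀ t ∈ S, u t ≤ max (u 0)
      ((a₀ + Real.sqrt (a₀ ^ 2 + 4 * A₁ * max A₂ 0 * M)) / (2 * A₁)) := by
    have := comp_bound T hS (w := u) (w' := u') (a := a₀) (A := A₁) (P := max A₂ 0 * M)
      (K := (a₀ + Real.sqrt (a₀ ^ 2 + 4 * A₁ * max A₂ 0 * M)) / (2 * A₁))
      ha₀ hA₁0 hPu hud
      (by
        intro x hxS
        have hU := hupos x hxS; have hV := hvpos x hxS
        have h1 := hui x hxS
        have h2 : A₂ * (u x * v x) ≤ max A₂ 0 * M := by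
          have huv := hprod x hxS
          rcases le_or_gt 0 A₂ with h | h
          · rw [max_eq_left h]
            exact mul_le_mul_of_nonneg_left huv h
          · rw [max_eq_right h.le, zero_mul]
            exact (mul_neg_of_neg_of_pos h (mul_pos hU hV)).le
        have h3 : u x * (a₀ - A₁ * u x + A₂ * v x)
            = a₀ * u x - A₁ * (u x) ^ 2 + A₂ * (u x * v x) := by ring
        linarith)
      (by ring_nf)
    exact this
  -- bound for v
  have hPv : (0:ℝ) ≤ max B₁ 0 * M := mul_nonneg (le_max_right _ _) hM0.le
  have hvbd : ∀ t ∈ S, v t ≤ max (v 0)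
      ((b₀ + Real.sqrt (b₀ ^ 2 + 4 * max B₁ 0 * B₂ * M)) / (2 * B₂)) := by
    have := comp_bound T hS (w := v) (w' := v') (a := b₀) (A := B₂) (P := max B₁ 0 * M)
      (K := (b₀ + Real.sqrt (b₀ ^ 2 + 4 * max B₁ 0 * B₂ * M)) / (2 * B₂))
      hb₀ hB₂0 hPv hvd
      (by
        intro x hxS
        have hU := hupos x hxS; have hV := hvpos x hxS
        have h1 := hvi x hxS
        have h2 : B₁ * (u x * v x) ≤ max B₁ 0 * M := by
          have huv := hprod x hxS
          rcases le_or_gt 0 B₁ with h | h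
          · rw [max_eq_left h]
            exact mul_le_mul_of_nonneg_left huv h
          · rw [max_eq_right h.le, zero_mul]
            exact (mul_neg_of_neg_of_pos h (mul_pos hU hV)).le
        have h3 : v x * (b₀ + B₁ * u x - B₂ * v x)
            = b₀ * v x - B₂ * (v x) ^ 2 + B₁ * (u x * v x) := by ring
        linarith)
      (by ring_nf)
    exact this
  exact fun t htS => ⟨⟨hupos t htS, hubd t htS⟩, ⟨hvpos t htS, hvbd t htS⟩⟩
end

section
/- Let T ∈ (0,∞], let a₀, b₀ > 0 and let A₁, A₂, B₁, B₂ be real numbers with A₁ > B₁ and B₂ > A₂. Let ū, v̄ : [0,T) → ℝ be positive continuously differentiable functions satisfying, for all t ∈ [0,T), ū'(t) ≤ ū(t)·(a₀ − A₁·ū(t) + A₂·v̄(t)) and v̄'(t) ≤ v̄(t)·(b₀ + B₁·ū(t) − B₂·v̄(t)). Then for all t ∈ [0,T), the product satisfies 0 < ū(t)·v̄(t) ≤ max{ū(0)·v̄(0), (a₀+b₀)² / (4·(min(A₁−B₁, B₂−A₂))²)}. -/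
open Filter Set

/-- Key intermediate product bound in the proof of Lemma 2.1. -/
theorem stmt_1 (T : ENNReal) (hT : 0 < T)
    (a₀ b₀ A₁ A₂ B₁ B₂ : ℝ) (ha₀ : 0 < a₀) (hb₀ : 0 < b₀)
    (hA₁ : A₁ > B₁) (hB₂ : B₂ > A₂)
    (S : Set ℝ) (hS : S = {t : ℝ | 0 ≤ t ∧ ENNReal.ofReal t < T})
    (u v u' v' : ℝ → ℝ)
    (hupos : ∀ t ∈ S, 0 < u t) (hvpos : ∀ t ∈ S, 0 < v t)
    (hud : ∀ t ∈ S, HasDerivWithinAt u (u' t) S t)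
    (hvd : ∀ t ∈ S, HasDerivWithinAt v (v' t) S t)
    (huc : ContinuousOn u' S) (hvc : ContinuousOn v' S)
    (hui : ∀ t ∈ S, u' t ≤ u t * (a₀ - A₁ * u t + A₂ * v t))
    (hvi : ∀ t ∈ S, v' t ≤ v t * (b₀ + B₁ * u t - B₂ * v t)) :
    ∀ t ∈ S,
      0 < u t * v t ∧
      u t * v t ≤ max (u 0 * v 0) ((a₀ + b₀) ^ 2 / (4 * (min (A₁ - B₁) (B₂ - A₂)) ^ 2)) := by
  intro t ht
  set m : ℝ := min (A₁ - B₁) (B₂ - A₂) with hm_def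
  have hm : 0 < m := lt_min (by linarith) (by linarith)
  set M : ℝ := (a₀ + b₀) ^ 2 / (4 * m ^ 2) with hM_def
  have ht0 : 0 ≤ t := by rw [hS] at ht; exact ht.1
  have htT : ENNReal.ofReal t < T := by rw [hS] at ht; exact ht.2
  have hsub : Icc 0 t ⊆ S := by
    rw [hS]
    intro s hs
    exact ⟨hs.1, lt_of_le_of_lt (ENNReal.ofReal_le_ofReal hs.2) htT⟩
  refine ⟨mul_pos (hupos t ht) (hvpos t ht), ?_⟩
  -- derivative is strictly negative whenever the product exceeds M
  have hbound : ∀ x ∈ S, M < u x * v x → u' x * v x + u x * v' x < 0 := by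
    intro x hxS hgt
    have hP : 0 < u x := hupos x hxS
    have hQ : 0 < v x := hvpos x hxS
    have h1 : u' x ≤ u x * (a₀ - A₁ * u x + A₂ * v x) := hui x hxS
    have h2 : v' x ≤ v x * (b₀ + B₁ * u x - B₂ * v x) := hvi x hxS
    set s := Real.sqrt (u x * v x) with hs_def
    have hs2 : s ^ 2 = u x * v x := Real.sq_sqrt (mul_pos hP hQ).le
    have hs_pos : 0 < s := Real.sqrt_pos.2 (mul_pos hP hQ)
    have hsgt : (a₀ + b₀) / (2 * m) < s := by
      rw [hs_def]
      rw [show Real.sqrt (u x * v x) = Real.sqrt (u x * v x) from rfl]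
      have : ((a₀ + b₀) / (2 * m)) ^ 2 < u x * v x := by
        have h4 : ((a₀ + b₀) / (2 * m)) ^ 2 = M := by
          rw [hM_def]; field_simp; ring
        linarith
      exact (Real.lt_sqrt (by positivity)).2 this
    have hAM : 2 * s ≤ u x + v x := by nlinarith [sq_nonneg (u x - v x)]
    have hm1 : m ≤ A₁ - B₁ := min_le_left _ _
    have hm2 : m ≤ B₂ - A₂ := min_le_right _ _
    have key : a₀ + b₀ < (A₁ - B₁) * u x + (B₂ - A₂) * v x := by
      have h5 : a₀ + b₀ < 2 * m * s := by
        have := (div_lt_iff₀ (by positivity : (0:ℝ) < 2 * m)).1 hsgt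
        linarith
      nlinarith [mul_nonneg (sub_nonneg.2 hm1) hP.le, mul_nonneg (sub_nonneg.2 hm2) hQ.le,
        mul_le_mul_of_nonneg_left hAM hm.le]
    nlinarith [mul_le_mul_of_nonneg_right h1 hQ.le, mul_le_mul_of_nonneg_left h2 hP.le,
      mul_pos hP hQ, mul_pos (mul_pos hP hQ) (sub_pos.2 key)]
  -- apply the fencing lemma with barrier max(w0, M) + ε
  refine le_of_forall_pos_le_add ?_
  intro ε hε
  set C : ℝ := max (u 0 * v 0) M + ε with hC_def
  have hcont : ContinuousOn (fun s => u s * v s) (Icc 0 t) := fun x hx =>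
    (((hud x (hsub hx)).mul (hvd x (hsub hx))).continuousWithinAt).mono hsub
  have hderiv : ∀ x ∈ Ico 0 t, HasDerivWithinAt (fun s => u s * v s)
      (u' x * v x + u x * v' x) (Ici x) x := by
    intro x hx
    have hxS : x ∈ S := hsub ⟨hx.1, hx.2.le⟩
    have hd := (hud x hxS).mul (hvd x hxS)
    refine hd.mono_of_mem_nhdsWithin ?_
    rw [mem_nhdsWithin]
    exact ⟨Ioo (x - 1) t, isOpen_Ioo, ⟨by linarith [hx.1], hx.2⟩,
      fun y hy => hsub ⟨le_trans hx.1 hy.2, hy.1.2.le⟩⟩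
  have hmain := image_le_of_deriv_right_lt_deriv_boundary hcont hderiv
    (B := fun _ => C) (B' := fun _ => 0)
    (by simpa using le_trans (le_max_left (u 0 * v 0) M) (by linarith : max (u 0 * v 0) M ≤ C))
    (fun x => hasDerivAt_const x C)
    (by
      intro x hx heq
      have hxS : x ∈ S := hsub ⟨hx.1, hx.2.le⟩
      have hgt : M < u x * v x := by
        have := le_max_right (u 0 * v 0) M
        rw [heq, hC_def]; linarith
      exact hbound x hxS hgt)
  exact hmain ⟨ht0, le_refl t⟩
end

section
/- Fix positive reals χ₁, χ₂, d₃, k, l, ω, a₀, b₀ and reals a₁, a₂, a₃, a₄, b₁, b₂, b₃, b₄. Let T ∈ (0,∞] and let ū, u̲, v̄, v̲ : [0,T) → ℝ be differentiable functions solving the comparison ODE system (given in the context) on [0,T) with nonnegative initial values satisfying ū(0) ≥ u̲(0) ≥ 0 and v̄(0) ≥ v̲(0) ≥ 0. Then for all t ∈ [0,T): 0 ≤ u̲(t) ≤ ū(t) and 0 ≤ v̲(t) ≤ v̄(t). -/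
open Filter Set Asymptotics

/-!
A linear system `f' ≥ A f + B g`, `g' ≥ C g + D f` on `[a, b]` with continuous coefficients
and `B, D ≥ 0` preserves nonnegativity: `φ = min(f, 0)² + min(g, 0)²` is differentiable with
`φ' ≤ 4 K φ`, where `K` bounds `A, B, C, D` from above, so Grönwall's inequality and
`φ(a) = 0` give `φ ≡ 0`.

Each component of the comparison system has the form `u' = u · (continuous)`, so `(u̲, v̲)`
and `(ū, v̄)` stay nonnegative. Then `(ū - u̲, v̄ - v̲)` solves a linear system whose
off-diagonal coefficients, such as
`(χ₁/d₃) l (ū + u̲) + ((a₂)₋ + ω (a₄)₋ + (a₂)₊ + ω (a₄)₊) u̲`,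
are nonnegative, and the same argument orders the solutions.
-/

theorem hasDerivAt_min_zero_sq (x : ℝ) : HasDerivAt (fun y => min y 0 ^ 2) (2 * min x 0) x := by
  rcases lt_trichotomy x 0 with hx | rfl | hx
  · have hpow : HasDerivAt (fun y : ℝ => y ^ 2) (2 * min x 0) x := by
      simpa [min_eq_left hx.le] using hasDerivAt_pow 2 x
    refine hpow.congr_of_eventuallyEq ?_
    filter_upwards [eventually_lt_nhds hx] with y hy
    rw [min_eq_left hy.le]
  · rw [hasDerivAt_iff_isLittleO_nhds_zero]
    simp only [zero_add, min_self, ne_eq, OfNat.ofNat_ne_zero, not_false_eq_true, zero_pow,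
      sub_zero, mul_zero, smul_zero]
    refine IsBigO.trans_isLittleO (IsBigO.of_bound 1 (Eventually.of_forall fun y => ?_))
      (isLittleO_pow_id one_lt_two)
    rcases le_total y 0 with hy | hy <;> simp [hy]
  · have hconst : HasDerivAt (fun _ : ℝ => (0 : ℝ)) (2 * min x 0) x := by
      simpa [min_eq_right hx.le] using hasDerivAt_const x (0 : ℝ)
    refine hconst.congr_of_eventuallyEq ?_
    filter_upwards [eventually_gt_nhds hx] with y hy
    simp [min_eq_right hy.le]

theorem min_zero_mul_self (x : ℝ) : min x 0 * x = min x 0 ^ 2 := by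
  rcases le_total x 0 with h | h <;> simp [h, sq]

theorem min_zero_mul_cooperative_le {x y A B C D K : ℝ} (hA : A ≤ K) (hC : C ≤ K)
    (hB : 0 ≤ B) (hBK : B ≤ K) (hD : 0 ≤ D) (hDK : D ≤ K) :
    2 * min x 0 * (A * x + B * y) + 2 * min y 0 * (C * y + D * x)
      ≤ 4 * K * (min x 0 ^ 2 + min y 0 ^ 2) := by
  have hm : min x 0 ≤ 0 := min_le_right x 0
  have hn : min y 0 ≤ 0 := min_le_right y 0
  have hmy : min x 0 * y ≤ min x 0 * min y 0 := mul_le_mul_of_nonpos_left (min_le_left y 0) hm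
  have hnx : min y 0 * x ≤ min y 0 * min x 0 := mul_le_mul_of_nonpos_left (min_le_left x 0) hn
  have hmn : 0 ≤ min x 0 * min y 0 := mul_nonneg_of_nonpos_of_nonpos hm hn
  have := min_zero_mul_self x
  have := min_zero_mul_self y
  nlinarith [mul_le_mul_of_nonneg_left hmy hB, mul_le_mul_of_nonneg_left hnx hD,
    mul_le_mul_of_nonneg_right hA (sq_nonneg (min x 0)),
    mul_le_mul_of_nonneg_right hC (sq_nonneg (min y 0)),
    mul_le_mul_of_nonneg_right hBK hmn, mul_le_mul_of_nonneg_right hDK hmn,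
    two_mul_le_add_sq (min x 0) (min y 0)]

theorem nonneg_of_cooperative_system {a b : ℝ} {f g f' g' A B C D : ℝ → ℝ}
    (hf : ∀ s ∈ Icc a b, HasDerivWithinAt f (f' s) (Icc a b) s)
    (hg : ∀ s ∈ Icc a b, HasDerivWithinAt g (g' s) (Icc a b) s)
    (hf' : ∀ s ∈ Icc a b, A s * f s + B s * g s ≤ f' s)
    (hg' : ∀ s ∈ Icc a b, C s * g s + D s * f s ≤ g' s)
    (hA : ContinuousOn A (Icc a b)) (hB : ContinuousOn B (Icc a b))
    (hC : ContinuousOn C (Icc a b)) (hD : ContinuousOn D (Icc a b))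
    (hB₀ : ∀ s ∈ Icc a b, 0 ≤ B s) (hD₀ : ∀ s ∈ Icc a b, 0 ≤ D s)
    (hfa : 0 ≤ f a) (hga : 0 ≤ g a) :
    ∀ s ∈ Icc a b, 0 ≤ f s ∧ 0 ≤ g s := by
  obtain ⟨K, hK⟩ := isCompact_Icc.bddAbove_image ((hA.sup hB).sup (hC.sup hD))
  set φ := fun s => min (f s) 0 ^ 2 + min (g s) 0 ^ 2
  set φ' := fun s => 2 * min (f s) 0 * f' s + 2 * min (g s) 0 * g' s
  have hφ : ∀ s ∈ Icc a b, HasDerivWithinAt φ (φ' s) (Icc a b) s := fun s hs =>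
    ((hasDerivAt_min_zero_sq (f s)).comp_hasDerivWithinAt s (hf s hs)).add
      ((hasDerivAt_min_zero_sq (g s)).comp_hasDerivWithinAt s (hg s hs))
  have hφ' : ∀ s ∈ Icc a b, φ' s ≤ 4 * K * φ s := by
    intro s hs
    have hKs := hK (mem_image_of_mem _ hs)
    simp only [sup_le_iff] at hKs
    calc φ' s ≤ 2 * min (f s) 0 * (A s * f s + B s * g s)
          + 2 * min (g s) 0 * (C s * g s + D s * f s) :=
          add_le_add
            (mul_le_mul_of_nonpos_left (hf' s hs) (by linarith [min_le_right (f s) 0]))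
            (mul_le_mul_of_nonpos_left (hg' s hs) (by linarith [min_le_right (g s) 0]))
      _ ≤ 4 * K * φ s :=
          min_zero_mul_cooperative_le hKs.1.1 hKs.2.1 (hB₀ s hs) hKs.1.2 (hD₀ s hs) hKs.2.2
  have hφ_right : ∀ x ∈ Ico a b, HasDerivWithinAt φ (φ' x) (Ici x) x := fun x hx =>
    (hφ x (Ico_subset_Icc_self hx)).mono_of_mem_nhdsWithin
      (mem_of_superset (Icc_mem_nhdsGE hx.2) (Icc_subset_Icc_left hx.1))
  have hφ₀ : ∀ s ∈ Icc a b, φ s ≤ 0 := by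
    intro s hs
    simpa [gronwallBound_ε0_δ0] using
      le_gronwallBound_of_liminf_deriv_right_le (δ := 0) (ε := 0)
        (fun s hs => (hφ s hs).continuousWithinAt)
        (fun x hx r hr => (hφ_right x hx).liminf_right_slope_le hr)
        (by simp [φ, hfa, hga]) (fun x hx => by simpa using hφ' x (Ico_subset_Icc_self hx)) s hs
  intro s hs
  have hφs := hφ₀ s hs
  constructor
  · by_contra h
    nlinarith [min_eq_left (not_le.mp h).le, sq_nonneg (min (g s) 0)]
  · by_contra h
    nlinarith [min_eq_left (not_le.mp h).le, sq_nonneg (min (f s) 0)]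

section ComparisonSystem

variable {a b c₁ c₂ k l a₀ b₀ p₁ q₁ r₁ s₁ p₂ q₂ r₂ s₂ : ℝ}

theorem nonneg_of_comparison_eq {u v U V u' v' : ℝ → ℝ}
    (hu : ∀ s ∈ Icc a b, HasDerivWithinAt u (u' s) (Icc a b) s)
    (hv : ∀ s ∈ Icc a b, HasDerivWithinAt v (v' s) (Icc a b) s)
    (hU : ContinuousOn U (Icc a b)) (hV : ContinuousOn V (Icc a b))
    (hu' : ∀ s ∈ Icc a b, u' s =
      c₁ * u s * (k * u s + l * v s - k * U s - l * V s)
      + u s * (a₀ - p₁ * u s - q₁ * U s) + u s * (r₁ * v s - s₁ * V s))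
    (hv' : ∀ s ∈ Icc a b, v' s =
      c₂ * v s * (k * u s + l * v s - k * U s - l * V s)
      + v s * (b₀ - p₂ * v s - q₂ * V s) + v s * (r₂ * u s - s₂ * U s))
    (hu₀ : 0 ≤ u a) (hv₀ : 0 ≤ v a) :
    ∀ s ∈ Icc a b, 0 ≤ u s ∧ 0 ≤ v s := by
  have hu_cont : ContinuousOn u (Icc a b) := fun s hs => (hu s hs).continuousWithinAt
  have hv_cont : ContinuousOn v (Icc a b) := fun s hs => (hv s hs).continuousWithinAt
  refine nonneg_of_cooperative_system (B := fun _ => 0) (D := fun _ => 0) hu hv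
    (A := fun s => c₁ * (k * u s + l * v s - k * U s - l * V s)
      + (a₀ - p₁ * u s - q₁ * U s) + (r₁ * v s - s₁ * V s))
    (C := fun s => c₂ * (k * u s + l * v s - k * U s - l * V s)
      + (b₀ - p₂ * v s - q₂ * V s) + (r₂ * u s - s₂ * U s))
    (fun s hs => le_of_eq (by rw [hu' s hs]; ring))
    (fun s hs => le_of_eq (by rw [hv' s hs]; ring))
    (by fun_prop) continuousOn_const (by fun_prop) continuousOn_const
    (fun _ _ => le_rfl) (fun _ _ => le_rfl) hu₀ hv₀

theorem comparison_system_ordered {uo ui vo vi uo' ui' vo' vi' : ℝ → ℝ}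
    (huo : ∀ s ∈ Icc a b, HasDerivWithinAt uo (uo' s) (Icc a b) s)
    (hui : ∀ s ∈ Icc a b, HasDerivWithinAt ui (ui' s) (Icc a b) s)
    (hvo : ∀ s ∈ Icc a b, HasDerivWithinAt vo (vo' s) (Icc a b) s)
    (hvi : ∀ s ∈ Icc a b, HasDerivWithinAt vi (vi' s) (Icc a b) s)
    (huo' : ∀ s ∈ Icc a b, uo' s =
      c₁ * uo s * (k * uo s + l * vo s - k * ui s - l * vi s)
      + uo s * (a₀ - p₁ * uo s - q₁ * ui s) + uo s * (r₁ * vo s - s₁ * vi s))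
    (hui' : ∀ s ∈ Icc a b, ui' s =
      c₁ * ui s * (k * ui s + l * vi s - k * uo s - l * vo s)
      + ui s * (a₀ - p₁ * ui s - q₁ * uo s) + ui s * (r₁ * vi s - s₁ * vo s))
    (hvo' : ∀ s ∈ Icc a b, vo' s =
      c₂ * vo s * (k * uo s + l * vo s - k * ui s - l * vi s)
      + vo s * (b₀ - p₂ * vo s - q₂ * vi s) + vo s * (r₂ * uo s - s₂ * ui s))
    (hvi' : ∀ s ∈ Icc a b, vi' s =
      c₂ * vi s * (k * ui s + l * vi s - k * uo s - l * vo s)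
      + vi s * (b₀ - p₂ * vi s - q₂ * vo s) + vi s * (r₂ * ui s - s₂ * uo s))
    (hc₁ : 0 ≤ c₁) (hc₂ : 0 ≤ c₂) (hk : 0 ≤ k) (hl : 0 ≤ l)
    (hr₁ : 0 ≤ r₁) (hs₁ : 0 ≤ s₁) (hr₂ : 0 ≤ r₂) (hs₂ : 0 ≤ s₂)
    (hui₀ : 0 ≤ ui a) (hu₀ : ui a ≤ uo a) (hvi₀ : 0 ≤ vi a) (hv₀ : vi a ≤ vo a) :
    ∀ s ∈ Icc a b, (0 ≤ ui s ∧ ui s ≤ uo s) ∧ (0 ≤ vi s ∧ vi s ≤ vo s) := by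
  have huo_cont : ContinuousOn uo (Icc a b) := fun s hs => (huo s hs).continuousWithinAt
  have hui_cont : ContinuousOn ui (Icc a b) := fun s hs => (hui s hs).continuousWithinAt
  have hvo_cont : ContinuousOn vo (Icc a b) := fun s hs => (hvo s hs).continuousWithinAt
  have hvi_cont : ContinuousOn vi (Icc a b) := fun s hs => (hvi s hs).continuousWithinAt
  have hlower := nonneg_of_comparison_eq hui hvi huo_cont hvo_cont hui' hvi' hui₀ hvi₀
  have hupper := nonneg_of_comparison_eq huo hvo hui_cont hvi_cont huo' hvo'
    (hui₀.trans hu₀) (hvi₀.trans hv₀)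
  have hdiff := nonneg_of_cooperative_system
    (f := fun s => uo s - ui s) (g := fun s => vo s - vi s)
    (fun s hs => (huo s hs).sub (hui s hs)) (fun s hs => (hvo s hs).sub (hvi s hs))
    (A := fun s => c₁ * k * (uo s + ui s) + a₀ - p₁ * (uo s + ui s)
      + r₁ * vo s - s₁ * vi s)
    (B := fun s => c₁ * l * (uo s + ui s) + (r₁ + s₁) * ui s)
    (C := fun s => c₂ * l * (vo s + vi s) + b₀ - p₂ * (vo s + vi s)
      + r₂ * uo s - s₂ * ui s)
    (D := fun s => c₂ * k * (vo s + vi s) + (r₂ + s₂) * vi s)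
    (fun s hs => le_of_eq (by rw [huo' s hs, hui' s hs]; ring))
    (fun s hs => le_of_eq (by rw [hvo' s hs, hvi' s hs]; ring))
    (by fun_prop) (by fun_prop) (by fun_prop) (by fun_prop)
    (fun s hs => add_nonneg
      (mul_nonneg (mul_nonneg hc₁ hl) (add_nonneg (hupper s hs).1 (hlower s hs).1))
      (mul_nonneg (add_nonneg hr₁ hs₁) (hlower s hs).1))
    (fun s hs => add_nonneg
      (mul_nonneg (mul_nonneg hc₂ hk) (add_nonneg (hupper s hs).2 (hlower s hs).2))
      (mul_nonneg (add_nonneg hr₂ hs₂) (hlower s hs).2))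
    (sub_nonneg.mpr hu₀) (sub_nonneg.mpr hv₀)
  intro s hs
  exact ⟨⟨(hlower s hs).1, sub_nonneg.mp (hdiff s hs).1⟩,
    ⟨(hlower s hs).2, sub_nonneg.mp (hdiff s hs).2⟩⟩

end ComparisonSystem

theorem stmt_2_general (χ₁ χ₂ d₃ k l ω a₀ b₀ : ℝ)
    (hχ₁ : 0 < χ₁) (hχ₂ : 0 < χ₂) (hd₃ : 0 < d₃) (hk : 0 < k) (hl : 0 < l)
    (hω : 0 < ω)
    (a₁ a₂ a₃ a₄ b₁ b₂ b₃ b₄ : ℝ)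
    (T : ENNReal)
    (S : Set ℝ) (hS : S = {t : ℝ | 0 ≤ t ∧ ENNReal.ofReal t < T})
    (uo ui vo vi uo' ui' vo' vi' : ℝ → ℝ)
    (huod : ∀ t ∈ S, HasDerivWithinAt uo (uo' t) S t)
    (huid : ∀ t ∈ S, HasDerivWithinAt ui (ui' t) S t)
    (hvod : ∀ t ∈ S, HasDerivWithinAt vo (vo' t) S t)
    (hvid : ∀ t ∈ S, HasDerivWithinAt vi (vi' t) S t)
    (heq1 : ∀ t ∈ S, uo' t =
      (χ₁ / d₃) * uo t * (k * uo t + l * vo t - k * ui t - l * vi t)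
      + uo t * (a₀ - (a₁ - ω * max (-a₃) 0) * uo t - ω * max a₃ 0 * ui t)
      + uo t * ((max (-a₂) 0 + ω * max (-a₄) 0) * vo t
          - (max a₂ 0 + ω * max a₄ 0) * vi t))
    (heq2 : ∀ t ∈ S, ui' t =
      (χ₁ / d₃) * ui t * (k * ui t + l * vi t - k * uo t - l * vo t)
      + ui t * (a₀ - (a₁ - ω * max (-a₃) 0) * ui t - ω * max a₃ 0 * uo t)
      + ui t * ((max (-a₂) 0 + ω * max (-a₄) 0) * vi t
          - (max a₂ 0 + ω * max a₄ 0) * vo t))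
    (heq3 : ∀ t ∈ S, vo' t =
      (χ₂ / d₃) * vo t * (k * uo t + l * vo t - k * ui t - l * vi t)
      + vo t * (b₀ - (b₂ - ω * max (-b₄) 0) * vo t - ω * max b₄ 0 * vi t)
      + vo t * ((max (-b₁) 0 + ω * max (-b₃) 0) * uo t
          - (max b₁ 0 + ω * max b₃ 0) * ui t))
    (heq4 : ∀ t ∈ S, vi' t =
      (χ₂ / d₃) * vi t * (k * ui t + l * vi t - k * uo t - l * vo t)
      + vi t * (b₀ - (b₂ - ω * max (-b₄) 0) * vi t - ω * max b₄ 0 * vo t)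
      + vi t * ((max (-b₁) 0 + ω * max (-b₃) 0) * ui t
          - (max b₁ 0 + ω * max b₃ 0) * uo t))
    (hu0 : 0 ≤ ui 0) (hu00 : ui 0 ≤ uo 0)
    (hv0 : 0 ≤ vi 0) (hv00 : vi 0 ≤ vo 0) :
    ∀ t ∈ S, (0 ≤ ui t ∧ ui t ≤ uo t) ∧ (0 ≤ vi t ∧ vi t ≤ vo t) := by
  intro t ht
  obtain ⟨ht₀, htT⟩ : 0 ≤ t ∧ ENNReal.ofReal t < T := by rwa [hS] at ht
  have hsub : Icc 0 t ⊆ S := by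
    rw [hS]
    exact fun s hs => ⟨hs.1, (ENNReal.ofReal_le_ofReal hs.2).trans_lt htT⟩
  have restrict {F F' : ℝ → ℝ} (hF : ∀ s ∈ S, HasDerivWithinAt F (F' s) S s) :
      ∀ s ∈ Icc 0 t, HasDerivWithinAt F (F' s) (Icc 0 t) s :=
    fun s hs => (hF s (hsub hs)).mono hsub
  exact comparison_system_ordered (restrict huod) (restrict huid) (restrict hvod) (restrict hvid)
    (fun s hs => heq1 s (hsub hs)) (fun s hs => heq2 s (hsub hs))
    (fun s hs => heq3 s (hsub hs)) (fun s hs => heq4 s (hsub hs))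
    (by positivity) (by positivity) hk.le hl.le (by positivity) (by positivity)
    (by positivity) (by positivity) hu0 hu00 hv0 hv00 t ⟨ht₀, le_rfl⟩

/-- Order-preservation part of Lemma 2.2: solutions of the comparison ODE
system with ordered nonnegative initial data stay ordered and nonnegative. -/
theorem stmt_2 (χ₁ χ₂ d₃ k l ω a₀ b₀ : ℝ)
    (hχ₁ : 0 < χ₁) (hχ₂ : 0 < χ₂) (hd₃ : 0 < d₃) (hk : 0 < k) (hl : 0 < l)
    (hω : 0 < ω) (ha₀ : 0 < a₀) (hb₀ : 0 < b₀)
    (a₁ a₂ a₃ a₄ b₁ b₂ b₃ b₄ : ℝ)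
    (T : ENNReal) (hT : 0 < T)
    (S : Set ℝ) (hS : S = {t : ℝ | 0 ≤ t ∧ ENNReal.ofReal t < T})
    (uo ui vo vi uo' ui' vo' vi' : ℝ → ℝ)
    (huod : ∀ t ∈ S, HasDerivWithinAt uo (uo' t) S t)
    (huid : ∀ t ∈ S, HasDerivWithinAt ui (ui' t) S t)
    (hvod : ∀ t ∈ S, HasDerivWithinAt vo (vo' t) S t)
    (hvid : ∀ t ∈ S, HasDerivWithinAt vi (vi' t) S t)
    (heq1 : ∀ t ∈ S, uo' t =
      (χ₁ / d₃) * uo t * (k * uo t + l * vo t - k * ui t - l * vi t)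
      + uo t * (a₀ - (a₁ - ω * max (-a₃) 0) * uo t - ω * max a₃ 0 * ui t)
      + uo t * ((max (-a₂) 0 + ω * max (-a₄) 0) * vo t
          - (max a₂ 0 + ω * max a₄ 0) * vi t))
    (heq2 : ∀ t ∈ S, ui' t =
      (χ₁ / d₃) * ui t * (k * ui t + l * vi t - k * uo t - l * vo t)
      + ui t * (a₀ - (a₁ - ω * max (-a₃) 0) * ui t - ω * max a₃ 0 * uo t)
      + ui t * ((max (-a₂) 0 + ω * max (-a₄) 0) * vi t
          - (max a₂ 0 + ω * max a₄ 0) * vo t))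
    (heq3 : ∀ t ∈ S, vo' t =
      (χ₂ / d₃) * vo t * (k * uo t + l * vo t - k * ui t - l * vi t)
      + vo t * (b₀ - (b₂ - ω * max (-b₄) 0) * vo t - ω * max b₄ 0 * vi t)
      + vo t * ((max (-b₁) 0 + ω * max (-b₃) 0) * uo t
          - (max b₁ 0 + ω * max b₃ 0) * ui t))
    (heq4 : ∀ t ∈ S, vi' t =
      (χ₂ / d₃) * vi t * (k * ui t + l * vi t - k * uo t - l * vo t)
      + vi t * (b₀ - (b₂ - ω * max (-b₄) 0) * vi t - ω * max b₄ 0 * vo t)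
      + vi t * ((max (-b₁) 0 + ω * max (-b₃) 0) * ui t
          - (max b₁ 0 + ω * max b₃ 0) * uo t))
    (hu0 : 0 ≤ ui 0) (hu00 : ui 0 ≤ uo 0)
    (hv0 : 0 ≤ vi 0) (hv00 : vi 0 ≤ vo 0) :
    ∀ t ∈ S, (0 ≤ ui t ∧ ui t ≤ uo t) ∧ (0 ≤ vi t ∧ vi t ≤ vo t) :=
  stmt_2_general χ₁ χ₂ d₃ k l ω a₀ b₀ hχ₁ hχ₂ hd₃ hk hl hω a₁ a₂ a₃ a₄ b₁ b₂ b₃ b₄ T S hS uo ui vo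
    vi uo' ui' vo' vi' huod huid hvod hvid heq1 heq2 heq3 heq4 hu0 hu00 hv0 hv00
end

section
/- Fix positive reals a₀, b₀, χ₁, χ₂, d₃, k, l, ω and reals a₁, a₂, a₃, a₄, b₁, b₂, b₃, b₄. Assume: a₁ > 2χ₁k/d₃ + ω|a₃|; b₂ > 2χ₂l/d₃ + ω|b₄|; b₂ + ω·b₄ > 0; b₁ + ω·b₃ > 0; and (a₂ + ω·a₄)/(b₂ + ω·b₄) < a₀/b₀ < (a₁ + ω·a₃)/(b₁ + ω·b₃). Let u̲, ū, v̲, v̄ be nonnegative reals with u̲ ≤ ū and v̲ ≤ v̄ satisfying the coexistence comparison inequalities (C1)–(C4) (given in the context). Then a₀ − (ω(a₃)₊ + χ₁k/d₃)·u̲ + ω(a₃)₋·ū − P₊·v̲ + P₋·v̄ ≥ 0 and b₀ − (ω(b₄)₊ + χ₂l/d₃)·v̲ + ω(b₄)₋·v̄ − Q₊·u̲ + Q₋·ū ≥ 0. -/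
/-- Core algebraic step shared by both halves of Lemma 3.3. -/
lemma stmt_8_core (a₀ b₀ B d e s Pp Pm vi vo : ℝ)
    (ha₀ : 0 < a₀) (hd : 0 < d) (he : 0 ≤ e)
    (hcd : d + e < B)
    (hs : s * b₀ < a₀ * (B - e + d))
    (hPm : 0 ≤ Pm) (hP : Pp - Pm = s)
    (hvi : 0 ≤ vi) (hvv : vi ≤ vo)
    (hc3 : B * vo ≤ max 0 (b₀ - d * vi + e * vo))
    (hc4 : B * vi ≥ max 0 (b₀ - d * vo + e * vi)) :
    0 ≤ a₀ - Pp * vi + Pm * vo := by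
  by_contra hneg
  push_neg at hneg
  have hvo : 0 ≤ vo := le_trans hvi hvv
  have hB : 0 < B := by linarith
  have hPpvi : 0 < Pp * vi := by nlinarith
  have hvipos : 0 < vi := by
    rcases lt_or_ge 0 vi with h | h
    · exact h
    · exfalso; have hvi0 : vi = 0 := le_antisymm h hvi
      rw [hvi0, mul_zero] at hPpvi; exact lt_irrefl 0 hPpvi
  -- the bracket in hc3 must be positive, otherwise vo ≤ 0 contradicting vi > 0
  have hbr : B * vo ≤ b₀ - d * vi + e * vo := by
    rcases le_or_gt (b₀ - d * vi + e * vo) 0 with h | h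
    · exfalso
      have : B * vo ≤ 0 := le_trans hc3 (by simp [max_le_iff, h, le_refl])
      nlinarith
    · calc B * vo ≤ max 0 (b₀ - d * vi + e * vo) := hc3
        _ = b₀ - d * vi + e * vo := max_eq_right (le_of_lt h)
  have hbr' : b₀ - d * vo + e * vi ≤ B * vi :=
    le_trans (le_max_right _ _) hc4
  -- (B - e - d)(vo - vi) ≤ 0, and B - e - d > 0, so vo = vi
  have heq : vo = vi := by nlinarith
  -- now (B - e + d) * vi ≤ b₀ and a₀ < s * vi
  have h1 : (B - e + d) * vi ≤ b₀ := by nlinarith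
  have h2 : a₀ < s * vi := by nlinarith
  have hspos : 0 < s := by nlinarith
  nlinarith [mul_le_mul_of_nonneg_left h1 (le_of_lt hspos)]

set_option maxHeartbeats 1000000 in
/-- Algebraic content of Lemma 3.3 (coexistence): under the stated parameter
conditions, the two bracketed quantities are nonnegative. -/
theorem stmt_8 (a₀ b₀ χ₁ χ₂ d₃ k l ω : ℝ)
    (ha₀ : 0 < a₀) (hb₀ : 0 < b₀) (hχ₁ : 0 < χ₁) (hχ₂ : 0 < χ₂)
    (hd₃ : 0 < d₃) (hk : 0 < k) (hl : 0 < l) (hω : 0 < ω)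
    (a₁ a₂ a₃ a₄ b₁ b₂ b₃ b₄ : ℝ)
    (h1 : a₁ > 2 * χ₁ * k / d₃ + ω * |a₃|)
    (h2 : b₂ > 2 * χ₂ * l / d₃ + ω * |b₄|)
    (h3 : 0 < b₂ + ω * b₄) (h4 : 0 < b₁ + ω * b₃)
    (h5 : (a₂ + ω * a₄) / (b₂ + ω * b₄) < a₀ / b₀)
    (h6 : a₀ / b₀ < (a₁ + ω * a₃) / (b₁ + ω * b₃))
    (Pp Pm Qp Qm : ℝ)
    (hPp : Pp = max a₂ 0 + ω * max a₄ 0 + l * χ₁ / d₃)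
    (hPm : Pm = max (-a₂) 0 + ω * max (-a₄) 0 + l * χ₁ / d₃)
    (hQp : Qp = max b₁ 0 + ω * max b₃ 0 + k * χ₂ / d₃)
    (hQm : Qm = max (-b₁) 0 + ω * max (-b₃) 0 + k * χ₂ / d₃)
    (ui uo vi vo : ℝ)
    (hui : 0 ≤ ui) (huo : ui ≤ uo) (hvi : 0 ≤ vi) (hvo : vi ≤ vo)
    (hC1 : (a₁ - χ₁ * k / d₃) * uo ≤
      max 0 (a₀ - (ω * max a₃ 0 + χ₁ * k / d₃) * ui + ω * max (-a₃) 0 * uo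
        - Pp * vi + Pm * vo))
    (hC2 : (a₁ - χ₁ * k / d₃) * ui ≥
      max 0 (a₀ - (ω * max a₃ 0 + χ₁ * k / d₃) * uo + ω * max (-a₃) 0 * ui
        - Pp * vo + Pm * vi))
    (hC3 : (b₂ - χ₂ * l / d₃) * vo ≤
      max 0 (b₀ - (ω * max b₄ 0 + χ₂ * l / d₃) * vi + ω * max (-b₄) 0 * vo
        - Qp * ui + Qm * uo))
    (hC4 : (b₂ - χ₂ * l / d₃) * vi ≥
      max 0 (b₀ - (ω * max b₄ 0 + χ₂ * l / d₃) * vo + ω * max (-b₄) 0 * vi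
        - Qp * uo + Qm * ui)) :
    0 ≤ a₀ - (ω * max a₃ 0 + χ₁ * k / d₃) * ui + ω * max (-a₃) 0 * uo
        - Pp * vi + Pm * vo
    ∧
    0 ≤ b₀ - (ω * max b₄ 0 + χ₂ * l / d₃) * vi + ω * max (-b₄) 0 * vo
        - Qp * ui + Qm * uo := by
  -- basic max/abs facts
  have sub2 : max a₂ 0 - max (-a₂) 0 = a₂ := max_zero_sub_max_neg_zero_eq_self a₂
  have sub4a : ω * max a₄ 0 - ω * max (-a₄) 0 = ω * a₄ := by
    rw [← mul_sub, max_zero_sub_max_neg_zero_eq_self a₄]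
  have sub1b : max b₁ 0 - max (-b₁) 0 = b₁ := max_zero_sub_max_neg_zero_eq_self b₁
  have sub3b : ω * max b₃ 0 - ω * max (-b₃) 0 = ω * b₃ := by
    rw [← mul_sub, max_zero_sub_max_neg_zero_eq_self b₃]
  have sub3 : ω * max a₃ 0 - ω * max (-a₃) 0 = ω * a₃ := by
    rw [← mul_sub, max_zero_sub_max_neg_zero_eq_self a₃]
  have add3 : ω * max a₃ 0 + ω * max (-a₃) 0 = ω * |a₃| := by
    rw [← mul_add, max_zero_add_max_neg_zero_eq_abs_self a₃]
  have sub4 : ω * max b₄ 0 - ω * max (-b₄) 0 = ω * b₄ := by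
    rw [← mul_sub, max_zero_sub_max_neg_zero_eq_self b₄]
  have add4 : ω * max b₄ 0 + ω * max (-b₄) 0 = ω * |b₄| := by
    rw [← mul_add, max_zero_add_max_neg_zero_eq_abs_self b₄]
  have hm3p : (0:ℝ) ≤ ω * max a₃ 0 := by positivity
  have hm3m : (0:ℝ) ≤ ω * max (-a₃) 0 := by positivity
  have hm4p : (0:ℝ) ≤ ω * max b₄ 0 := by positivity
  have hm4m : (0:ℝ) ≤ ω * max (-b₄) 0 := by positivity
  have subP : Pp - Pm = a₂ + ω * a₄ := by rw [hPp, hPm]; linarith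
  have subQ : Qp - Qm = b₁ + ω * b₃ := by rw [hQp, hQm]; linarith
  have hPmpos : 0 ≤ Pm := by
    rw [hPm]
    have h₁ : (0:ℝ) ≤ max (-a₂) 0 := le_max_right _ _
    have h₂ : (0:ℝ) ≤ ω * max (-a₄) 0 := by positivity
    have h₃ : (0:ℝ) ≤ l * χ₁ / d₃ := by positivity
    linarith
  have hQmpos : 0 ≤ Qm := by
    rw [hQm]
    have h₁ : (0:ℝ) ≤ max (-b₁) 0 := le_max_right _ _
    have h₂ : (0:ℝ) ≤ ω * max (-b₃) 0 := by positivity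
    have h₃ : (0:ℝ) ≤ k * χ₂ / d₃ := by positivity
    linarith
  have hchi1 : 0 < χ₁ * k / d₃ := by positivity
  have hchi2 : 0 < χ₂ * l / d₃ := by positivity
  have hchi1' : 2 * χ₁ * k / d₃ = χ₁ * k / d₃ + χ₁ * k / d₃ := by ring
  have hchi2' : 2 * χ₂ * l / d₃ = χ₂ * l / d₃ + χ₂ * l / d₃ := by ring
  have habs3 : 0 ≤ ω * |a₃| := by positivity
  have habs4 : 0 ≤ ω * |b₄| := by positivity
  have hA : 0 < a₁ - χ₁ * k / d₃ := by rw [hchi1'] at h1; linarith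
  have hB : 0 < b₂ - χ₂ * l / d₃ := by rw [hchi2'] at h2; linarith
  have h5' : (a₂ + ω * a₄) * b₀ < a₀ * (b₂ + ω * b₄) := by
    rw [div_lt_div_iff₀ h3 hb₀] at h5; linarith
  have ha1 : 0 < a₁ + ω * a₃ := by
    have := neg_abs_le a₃
    have : -(ω * |a₃|) ≤ ω * a₃ := by
      rw [← mul_neg] at *; exact mul_le_mul_of_nonneg_left (neg_abs_le a₃) hω.le
    rw [hchi1'] at h1; linarith
  have h6' : (b₁ + ω * b₃) * a₀ < b₀ * (a₁ + ω * a₃) := by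
    rw [div_lt_div_iff₀ hb₀ h4] at h6; linarith
  have hcdP : (ω * max b₄ 0 + χ₂ * l / d₃) + ω * max (-b₄) 0 < b₂ - χ₂ * l / d₃ := by
    rw [hchi2'] at h2; linarith
  have hcdQ : (ω * max a₃ 0 + χ₁ * k / d₃) + ω * max (-a₃) 0 < a₁ - χ₁ * k / d₃ := by
    rw [hchi1'] at h1; linarith
  have hsP : (a₂ + ω * a₄) * b₀ <
      a₀ * ((b₂ - χ₂ * l / d₃) - ω * max (-b₄) 0 + (ω * max b₄ 0 + χ₂ * l / d₃)) := by
    have heq : (b₂ - χ₂ * l / d₃) - ω * max (-b₄) 0 + (ω * max b₄ 0 + χ₂ * l / d₃)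
        = b₂ + ω * b₄ := by linarith
    rw [heq]; exact h5'
  have hsQ : (b₁ + ω * b₃) * a₀ <
      b₀ * ((a₁ - χ₁ * k / d₃) - ω * max (-a₃) 0 + (ω * max a₃ 0 + χ₁ * k / d₃)) := by
    have heq : (a₁ - χ₁ * k / d₃) - ω * max (-a₃) 0 + (ω * max a₃ 0 + χ₁ * k / d₃)
        = a₁ + ω * a₃ := by linarith
    rw [heq]; exact h6'
  constructor
  · -- first bracket
    by_contra hneg
    push_neg at hneg
    have hmax0 := max_eq_left (le_of_lt hneg)
    rw [hmax0] at hC1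
    have huo0 : uo = 0 := by
      have h0 : 0 ≤ uo := le_trans hui huo
      by_contra hne
      have hpos : 0 < uo := lt_of_le_of_ne h0 (Ne.symm hne)
      have := mul_pos hA hpos
      linarith
    have hui0 : ui = 0 := le_antisymm (huo0 ▸ huo) hui
    rw [hui0, huo0] at hC3 hC4 hneg
    have hc3' : (b₂ - χ₂ * l / d₃) * vo ≤
        max 0 (b₀ - (ω * max b₄ 0 + χ₂ * l / d₃) * vi + ω * max (-b₄) 0 * vo) := by
      simpa using hC3
    have hc4' : (b₂ - χ₂ * l / d₃) * vi ≥
        max 0 (b₀ - (ω * max b₄ 0 + χ₂ * l / d₃) * vo + ω * max (-b₄) 0 * vi) := by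
      simpa using hC4
    have key := stmt_8_core a₀ b₀ (b₂ - χ₂ * l / d₃) (ω * max b₄ 0 + χ₂ * l / d₃)
      (ω * max (-b₄) 0) (a₂ + ω * a₄) Pp Pm vi vo ha₀
      (by linarith) hm4m hcdP hsP hPmpos subP hvi hvo hc3' hc4'
    simp only [mul_zero, zero_mul] at hneg
    linarith
  · -- second bracket
    by_contra hneg
    push_neg at hneg
    have hmax0 := max_eq_left (le_of_lt hneg)
    rw [hmax0] at hC3
    have hvo0 : vo = 0 := by
      have h0 : 0 ≤ vo := le_trans hvi hvo
      by_contra hne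
      have hpos : 0 < vo := lt_of_le_of_ne h0 (Ne.symm hne)
      have := mul_pos hB hpos
      linarith
    have hvi0 : vi = 0 := le_antisymm (hvo0 ▸ hvo) hvi
    rw [hvi0, hvo0] at hC1 hC2 hneg
    have hc1' : (a₁ - χ₁ * k / d₃) * uo ≤
        max 0 (a₀ - (ω * max a₃ 0 + χ₁ * k / d₃) * ui + ω * max (-a₃) 0 * uo) := by
      simpa using hC1
    have hc2' : (a₁ - χ₁ * k / d₃) * ui ≥
        max 0 (a₀ - (ω * max a₃ 0 + χ₁ * k / d₃) * uo + ω * max (-a₃) 0 * ui) := by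
      simpa using hC2
    have key := stmt_8_core b₀ a₀ (a₁ - χ₁ * k / d₃) (ω * max a₃ 0 + χ₁ * k / d₃)
      (ω * max (-a₃) 0) (b₁ + ω * b₃) Qp Qm ui uo hb₀
      (by linarith) hm3m hcdQ hsQ hQmpos subQ hui huo hc1' hc2'
    simp only [mul_zero, zero_mul] at hneg
    linarith
end

section
/- Fix positive reals a₀, b₀, χ₁, χ₂, d₃, k, l, ω and reals a₁, a₂, a₃, a₄, b₁, b₂, b₃, b₄. Assume: a₁ > 2χ₁k/d₃ + ω|a₃|; b₂ > 2χ₂l/d₃ + ω|b₄|; b₂ + ω·b₄ > 0; b₁ + ω·b₃ > 0; (a₂ + ω·a₄)/(b₂ + ω·b₄) < a₀/b₀ < (a₁ + ω·a₃)/(b₁ + ω·b₃); and (a₁ − 2χ₁k/d₃ − ω|a₃|)·(b₂ − 2χ₂l/d₃ − ω|b₄|) > (|a₂| + ω|a₄| + 2lχ₁/d₃)·(|b₁| + ω|b₃| + 2kχ₂/d₃). Let u̲, ū, v̲, v̄ be nonnegative reals with u̲ ≤ ū and v̲ ≤ v̄ satisfying the coexistence comparison inequalities (C1)–(C4) (given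 in the context). Then u̲ = ū = u* and v̲ = v̄ = v*, where u* = (a₀(b₂ + ωb₄) − b₀(a₂ + ωa₄)) / ((b₂ + ωb₄)(a₁ + ωa₃) − (a₂ + ωa₄)(b₁ + ωb₃)) and v* = (a₀(b₁ + ωb₃) − b₀(a₁ + ωa₃)) / ((b₁ + ωb₃)(a₂ + ωa₄) − (a₁ + ωa₃)(b₂ + ωb₄)). -/
/-- Auxiliary: if A*X ≤ P*Y, B*Y ≤ Q*X with positive A,B, nonneg P,Q,X,Y and
A*B > P*Q, then X = Y = 0. -/
lemma stmt_9_aux (A B P Q X Y : ℝ) (hA : 0 < A) (hB : 0 < B)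
    (hP : 0 ≤ P) (hQ : 0 ≤ Q) (hX : 0 ≤ X) (hY : 0 ≤ Y)
    (h7 : A * B > P * Q) (hu : A * X ≤ P * Y) (hv : B * Y ≤ Q * X) :
    X = 0 ∧ Y = 0 := by
  have h1 : (A * X) * (B * Y) ≤ (P * Y) * (Q * X) :=
    mul_le_mul hu hv (by positivity) (by positivity)
  have hXY : X * Y = 0 := by nlinarith [mul_nonneg hX hY]
  rcases mul_eq_zero.mp hXY with h | h
  · refine ⟨h, le_antisymm ?_ hY⟩
    nlinarith
  · refine ⟨le_antisymm ?_ hX, h⟩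
    nlinarith

set_option maxHeartbeats 1000000 in
/-- Algebraic core of Theorem 1.2 (coexistence at the positive constant
steady state (u*, v*)). -/
theorem stmt_9 (a₀ b₀ χ₁ χ₂ d₃ k l ω : ℝ)
    (ha₀ : 0 < a₀) (hb₀ : 0 < b₀) (hχ₁ : 0 < χ₁) (hχ₂ : 0 < χ₂)
    (hd₃ : 0 < d₃) (hk : 0 < k) (hl : 0 < l) (hω : 0 < ω)
    (a₁ a₂ a₃ a₄ b₁ b₂ b₃ b₄ : ℝ)
    (h1 : a₁ > 2 * χ₁ * k / d₃ + ω * |a₃|)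
    (h2 : b₂ > 2 * χ₂ * l / d₃ + ω * |b₄|)
    (h3 : 0 < b₂ + ω * b₄) (h4 : 0 < b₁ + ω * b₃)
    (h5 : (a₂ + ω * a₄) / (b₂ + ω * b₄) < a₀ / b₀)
    (h6 : a₀ / b₀ < (a₁ + ω * a₃) / (b₁ + ω * b₃))
    (h7 : (a₁ - 2 * χ₁ * k / d₃ - ω * |a₃|) * (b₂ - 2 * χ₂ * l / d₃ - ω * |b₄|)
      > (|a₂| + ω * |a₄| + 2 * l * χ₁ / d₃) * (|b₁| + ω * |b₃| + 2 * k * χ₂ / d₃))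
    (Pp Pm Qp Qm : ℝ)
    (hPp : Pp = max a₂ 0 + ω * max a₄ 0 + l * χ₁ / d₃)
    (hPm : Pm = max (-a₂) 0 + ω * max (-a₄) 0 + l * χ₁ / d₃)
    (hQp : Qp = max b₁ 0 + ω * max b₃ 0 + k * χ₂ / d₃)
    (hQm : Qm = max (-b₁) 0 + ω * max (-b₃) 0 + k * χ₂ / d₃)
    (ui uo vi vo : ℝ)
    (hui : 0 ≤ ui) (huo : ui ≤ uo) (hvi : 0 ≤ vi) (hvo : vi ≤ vo)
    (hC1 : (a₁ - χ₁ * k / d₃) * uo ≤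
      max 0 (a₀ - (ω * max a₃ 0 + χ₁ * k / d₃) * ui + ω * max (-a₃) 0 * uo
        - Pp * vi + Pm * vo))
    (hC2 : (a₁ - χ₁ * k / d₃) * ui ≥
      max 0 (a₀ - (ω * max a₃ 0 + χ₁ * k / d₃) * uo + ω * max (-a₃) 0 * ui
        - Pp * vo + Pm * vi))
    (hC3 : (b₂ - χ₂ * l / d₃) * vo ≤
      max 0 (b₀ - (ω * max b₄ 0 + χ₂ * l / d₃) * vi + ω * max (-b₄) 0 * vo
        - Qp * ui + Qm * uo))
    (hC4 : (b₂ - χ₂ * l / d₃) * vi ≥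
      max 0 (b₀ - (ω * max b₄ 0 + χ₂ * l / d₃) * vo + ω * max (-b₄) 0 * vi
        - Qp * uo + Qm * ui))
    (ustar vstar : ℝ)
    (hustar : ustar = (a₀ * (b₂ + ω * b₄) - b₀ * (a₂ + ω * a₄))
      / ((b₂ + ω * b₄) * (a₁ + ω * a₃) - (a₂ + ω * a₄) * (b₁ + ω * b₃)))
    (hvstar : vstar = (a₀ * (b₁ + ω * b₃) - b₀ * (a₁ + ω * a₃))
      / ((b₁ + ω * b₃) * (a₂ + ω * a₄) - (a₁ + ω * a₃) * (b₂ + ω * b₄))) :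
    ui = ustar ∧ uo = ustar ∧ vi = vstar ∧ vo = vstar := by
  subst hPp hPm hQp hQm
  simp only [div_eq_mul_inv] at h1 h2 h7 hC1 hC2 hC3 hC4
  have habs : ∀ x : ℝ, max x 0 + max (-x) 0 = |x| := by
    intro x
    rcases le_total 0 x with h | h
    · rw [max_eq_left h, max_eq_right (neg_nonpos.mpr h), abs_of_nonneg h]; ring
    · rw [max_eq_right h, max_eq_left (neg_nonneg.mpr h), abs_of_nonpos h]; ring
  have hsub : ∀ x : ℝ, max x 0 - max (-x) 0 = x := by
    intro x
    rcases le_total 0 x with h | h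
    · rw [max_eq_left h, max_eq_right (neg_nonpos.mpr h)]; ring
    · rw [max_eq_right h, max_eq_left (neg_nonneg.mpr h)]; ring
  have hc1 : 0 < χ₁ * k * d₃⁻¹ := by positivity
  have hc2 : 0 < χ₂ * l * d₃⁻¹ := by positivity
  have ha3n : 0 ≤ ω * |a₃| := by positivity
  have hb4n : 0 ≤ ω * |b₄| := by positivity
  have hac : 0 < a₁ - χ₁ * k * d₃⁻¹ := by linarith
  have hbc : 0 < b₂ - χ₂ * l * d₃⁻¹ := by linarith
  have hA1 : 0 < a₁ + ω * a₃ := by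
    linarith [mul_le_mul_of_nonneg_left (neg_abs_le a₃) hω.le]
  have cross1 : (a₂ + ω * a₄) * b₀ < a₀ * (b₂ + ω * b₄) :=
    (div_lt_div_iff₀ h3 hb₀).mp h5
  have cross2 : a₀ * (b₁ + ω * b₃) < (a₁ + ω * a₃) * b₀ :=
    (div_lt_div_iff₀ hb₀ h4).mp h6
  have hC1' := le_max_iff.mp hC1
  have hC2' := (le_max_right (0:ℝ) _).trans hC2.le
  have hC3' := le_max_iff.mp hC3
  have hC4' := (le_max_right (0:ℝ) _).trans hC4.le
  -- Step 1: contraction inequalities for the differences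
  have hdu : (a₁ - 2 * χ₁ * k * d₃⁻¹ - ω * |a₃|) * (uo - ui) ≤
      (|a₂| + ω * |a₄| + 2 * l * χ₁ * d₃⁻¹) * (vo - vi) := by
    rcases hC1' with h | h
    · have huo0 : uo = 0 := by
        have hle : uo ≤ 0 := by
          by_contra hpos
          push_neg at hpos
          exact absurd h (not_le.mpr (mul_pos hac hpos))
        exact le_antisymm hle (hui.trans huo)
      have hui0 : ui = 0 := le_antisymm (huo0 ▸ huo) hui
      rw [huo0, hui0]
      have : 0 ≤ (|a₂| + ω * |a₄| + 2 * l * χ₁ * d₃⁻¹) * (vo - vi) :=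
        mul_nonneg (by positivity) (by linarith)
      linarith
    · have g3 : ω * |a₃| * (uo - ui) = ω * max a₃ 0 * (uo - ui)
          + ω * max (-a₃) 0 * (uo - ui) := by
        linear_combination (-(ω * (uo - ui))) * habs a₃
      have g2 : |a₂| * (vo - vi) = max a₂ 0 * (vo - vi)
          + max (-a₂) 0 * (vo - vi) := by
        linear_combination (-(vo - vi)) * habs a₂
      have g4 : ω * |a₄| * (vo - vi) = ω * max a₄ 0 * (vo - vi)
          + ω * max (-a₄) 0 * (vo - vi) := by
        linear_combination (-(ω * (vo - vi))) * habs a₄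
      linarith [h, hC2', g3, g2, g4]
  have hdv : (b₂ - 2 * χ₂ * l * d₃⁻¹ - ω * |b₄|) * (vo - vi) ≤
      (|b₁| + ω * |b₃| + 2 * k * χ₂ * d₃⁻¹) * (uo - ui) := by
    rcases hC3' with h | h
    · have hvo0 : vo = 0 := by
        have hle : vo ≤ 0 := by
          by_contra hpos
          push_neg at hpos
          exact absurd h (not_le.mpr (mul_pos hbc hpos))
        exact le_antisymm hle (hvi.trans hvo)
      have hvi0 : vi = 0 := le_antisymm (hvo0 ▸ hvo) hvi
      rw [hvo0, hvi0]
      have : 0 ≤ (|b₁| + ω * |b₃| + 2 * k * χ₂ * d₃⁻¹) * (uo - ui) :=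
        mul_nonneg (by positivity) (by linarith)
      linarith
    · have g4 : ω * |b₄| * (vo - vi) = ω * max b₄ 0 * (vo - vi)
          + ω * max (-b₄) 0 * (vo - vi) := by
        linear_combination (-(ω * (vo - vi))) * habs b₄
      have g1 : |b₁| * (uo - ui) = max b₁ 0 * (uo - ui)
          + max (-b₁) 0 * (uo - ui) := by
        linear_combination (-(uo - ui)) * habs b₁
      have g3 : ω * |b₃| * (uo - ui) = ω * max b₃ 0 * (uo - ui)
          + ω * max (-b₃) 0 * (uo - ui) := by
        linear_combination (-(ω * (uo - ui))) * habs b₃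
      linarith [h, hC4', g4, g1, g3]
  -- Step 2: the differences vanish
  have hα : 0 < a₁ - 2 * χ₁ * k * d₃⁻¹ - ω * |a₃| := by linarith
  have hβ : 0 < b₂ - 2 * χ₂ * l * d₃⁻¹ - ω * |b₄| := by linarith
  have hPpos : (0:ℝ) ≤ |a₂| + ω * |a₄| + 2 * l * χ₁ * d₃⁻¹ := by positivity
  have hQpos : (0:ℝ) ≤ |b₁| + ω * |b₃| + 2 * k * χ₂ * d₃⁻¹ := by positivity
  obtain ⟨hXu, hXv⟩ := stmt_9_aux _ _ _ _ _ _ hα hβ hPpos hQpos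
    (by linarith) (by linarith) h7 hdu hdv
  have huoi : uo = ui := by linarith
  have hvoi : vo = vi := by linarith
  rw [huoi, hvoi] at hC1' hC2' hC3' hC4'
  -- Step 3: positivity of ui and vi
  have hui_pos : 0 < ui := by
    rcases hui.lt_or_eq with h | h
    · exact h
    exfalso
    rw [← h] at hC2' hC3' hC4'
    have g2 : max a₂ 0 * vi - max (-a₂) 0 * vi = a₂ * vi := by
      linear_combination vi * hsub a₂
    have g4 : ω * max a₄ 0 * vi - ω * max (-a₄) 0 * vi = ω * a₄ * vi := by
      linear_combination (ω * vi) * hsub a₄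
    have key : a₀ ≤ (a₂ + ω * a₄) * vi := by linarith [hC2', g2, g4]
    have hvi_pos : 0 < vi := by
      rcases hvi.lt_or_eq with h' | h'
      · exact h'
      exfalso
      rw [← h'] at key
      linarith [key, ha₀]
    have hL : 0 < (b₂ - χ₂ * l * d₃⁻¹) * vi := mul_pos hbc hvi_pos
    rcases hC3' with h3' | h3'
    · linarith
    have g4b : ω * max b₄ 0 * vi - ω * max (-b₄) 0 * vi = ω * b₄ * vi := by
      linear_combination (ω * vi) * hsub b₄
    have hFeq : (b₂ + ω * b₄) * vi = b₀ := by linarith [h3', hC4', g4b]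
    have hm : a₀ * (b₂ + ω * b₄) ≤ (a₂ + ω * a₄) * vi * (b₂ + ω * b₄) :=
      mul_le_mul_of_nonneg_right key h3.le
    have hm2 : (a₂ + ω * a₄) * ((b₂ + ω * b₄) * vi) = (a₂ + ω * a₄) * b₀ := by
      rw [hFeq]
    linarith [hm, hm2, cross1]
  have hvi_pos : 0 < vi := by
    rcases hvi.lt_or_eq with h | h
    · exact h
    exfalso
    rw [← h] at hC1' hC2' hC4'
    have g1 : max b₁ 0 * ui - max (-b₁) 0 * ui = b₁ * ui := by
      linear_combination ui * hsub b₁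
    have g3 : ω * max b₃ 0 * ui - ω * max (-b₃) 0 * ui = ω * b₃ * ui := by
      linear_combination (ω * ui) * hsub b₃
    have key : b₀ ≤ (b₁ + ω * b₃) * ui := by linarith [hC4', g1, g3]
    have hL : 0 < (a₁ - χ₁ * k * d₃⁻¹) * ui := mul_pos hac hui_pos
    rcases hC1' with h1' | h1'
    · linarith
    have g3a : ω * max a₃ 0 * ui - ω * max (-a₃) 0 * ui = ω * a₃ * ui := by
      linear_combination (ω * ui) * hsub a₃
    have hEeq : (a₁ + ω * a₃) * ui = a₀ := by linarith [h1', hC2', g3a]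
    have hm : b₀ * (a₁ + ω * a₃) ≤ (b₁ + ω * b₃) * ui * (a₁ + ω * a₃) :=
      mul_le_mul_of_nonneg_right key hA1.le
    have hm2 : (b₁ + ω * b₃) * ((a₁ + ω * a₃) * ui) = (b₁ + ω * b₃) * a₀ := by
      rw [hEeq]
    linarith [hm, hm2, cross2]
  -- Step 4: the steady-state equations
  have hLu : 0 < (a₁ - χ₁ * k * d₃⁻¹) * ui := mul_pos hac hui_pos
  have hLv : 0 < (b₂ - χ₂ * l * d₃⁻¹) * vi := mul_pos hbc hvi_pos
  rcases hC1' with h1' | h1'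
  · linarith
  rcases hC3' with h3' | h3'
  · linarith
  have eqA : (a₁ + ω * a₃) * ui + (a₂ + ω * a₄) * vi = a₀ := by
    have g3 : ω * max a₃ 0 * ui - ω * max (-a₃) 0 * ui = ω * a₃ * ui := by
      linear_combination (ω * ui) * hsub a₃
    have g2 : max a₂ 0 * vi - max (-a₂) 0 * vi = a₂ * vi := by
      linear_combination vi * hsub a₂
    have g4 : ω * max a₄ 0 * vi - ω * max (-a₄) 0 * vi = ω * a₄ * vi := by
      linear_combination (ω * vi) * hsub a₄
    linarith [h1', hC2', g3, g2, g4]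
  have eqB : (b₁ + ω * b₃) * ui + (b₂ + ω * b₄) * vi = b₀ := by
    have g4 : ω * max b₄ 0 * vi - ω * max (-b₄) 0 * vi = ω * b₄ * vi := by
      linear_combination (ω * vi) * hsub b₄
    have g1 : max b₁ 0 * ui - max (-b₁) 0 * ui = b₁ * ui := by
      linear_combination ui * hsub b₁
    have g3 : ω * max b₃ 0 * ui - ω * max (-b₃) 0 * ui = ω * b₃ * ui := by
      linear_combination (ω * ui) * hsub b₃
    linarith [h3', hC4', g4, g1, g3]
  -- Step 5: solve the linear system
  have hD : 0 < (b₂ + ω * b₄) * (a₁ + ω * a₃) - (a₂ + ω * a₄) * (b₁ + ω * b₃) := by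
    have step : b₀ * ((a₂ + ω * a₄) * (b₁ + ω * b₃))
        < b₀ * ((a₁ + ω * a₃) * (b₂ + ω * b₄)) := by
      linarith [mul_lt_mul_of_pos_right cross1 h4, mul_lt_mul_of_pos_right cross2 h3]
    have := lt_of_mul_lt_mul_left step hb₀.le
    linarith
  have hui_eq : ui = ustar := by
    rw [hustar, eq_div_iff (ne_of_gt hD)]
    linear_combination (b₂ + ω * b₄) * eqA - (a₂ + ω * a₄) * eqB
  have hvi_eq : vi = vstar := by
    have hD' : (b₁ + ω * b₃) * (a₂ + ω * a₄) - (a₁ + ω * a₃) * (b₂ + ω * b₄) ≠ 0 :=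
      ne_of_lt (by linarith)
    rw [hvstar, eq_div_iff hD']
    linear_combination (b₁ + ω * b₃) * eqA - (a₁ + ω * a₃) * eqB
  exact ⟨hui_eq, by rw [huoi]; exact hui_eq, hvi_eq, by rw [hvoi]; exact hvi_eq⟩
end

section
/- Fix positive reals a₀, b₀, a₁, a₂, a₃, a₄, b₁, b₂, b₃, b₄, χ₁, χ₂, d₃, k, l, ω. Assume: a₁ > 2χ₁k/d₃ + ω·a₃; b₂ > 2χ₂l/d₃ + ω·b₄; (a₂ + ω·a₄)/(b₂ + ω·b₄) < a₀/b₀ < (a₁ + ω·a₃)/(b₁ + ω·b₃); a₂ ≥ χ₁l/d₃ and b₁ ≥ χ₂k/d₃; and (a₁ − 2χ₁k/d₃ − ω·a₃)·(b₂ − 2χ₂l/d₃ − ω·b₄) > (a₂ + ω·a₄)·(b₁ + ω·b₃). Let u̲, ū, v̲, v̄ be nonnegative reals with u̲ ≤ ū and v̲ ≤ v̄ satisfying: (a₁ − χ₁k/d₃)·ū ≤ max(0, a₀ − (ω·a₃ + χ₁k/d₃)·u̲ − (a₂ + ω·a₄)·v̲); (a₁ − χ₁k/d₃)·u̲ ≥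 max(0, a₀ − (ω·a₃ + χ₁k/d₃)·ū − (a₂ + ω·a₄)·v̄); (b₂ − χ₂l/d₃)·v̄ ≤ max(0, b₀ − (ω·b₄ + χ₂l/d₃)·v̲ − (b₁ + ω·b₃)·u̲); (b₂ − χ₂l/d₃)·v̲ ≥ max(0, b₀ − (ω·b₄ + χ₂l/d₃)·v̄ − (b₁ + ω·b₃)·ū). Then u̲ = ū = u* and v̲ = v̄ = v*, where u* = (a₀(b₂ + ωb₄) − b₀(a₂ + ωa₄)) / ((b₂ + ωb₄)(a₁ + ωa₃) − (a₂ + ωa₄)(b₁ + ωb₃)) and v* = (a₀(b₁ + ωb₃) − b₀(a₁ + ωa₃)) / ((b₁ + ωb₃)(a₂ + ωa₄) − (a₁ + ωa₃)(b₂ + ωb₄)). -/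
/-- Algebraic core of Theorem 1.3 (coexistence in the fully competitive case
under conditions (1.6), (1.7), (1.8), (1.10), (1.11)). -/
theorem stmt_10 (a₀ b₀ a₁ a₂ a₃ a₄ b₁ b₂ b₃ b₄ χ₁ χ₂ d₃ k l ω : ℝ)
    (ha₀ : 0 < a₀) (hb₀ : 0 < b₀)
    (ha₁ : 0 < a₁) (ha₂ : 0 < a₂) (ha₃ : 0 < a₃) (ha₄ : 0 < a₄)
    (hb₁ : 0 < b₁) (hb₂ : 0 < b₂) (hb₃ : 0 < b₃) (hb₄ : 0 < b₄)
    (hχ₁ : 0 < χ₁) (hχ₂ : 0 < χ₂) (hd₃ : 0 < d₃) (hk : 0 < k) (hl : 0 < l)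
    (hω : 0 < ω)
    (h1 : a₁ > 2 * χ₁ * k / d₃ + ω * a₃)
    (h2 : b₂ > 2 * χ₂ * l / d₃ + ω * b₄)
    (h3 : (a₂ + ω * a₄) / (b₂ + ω * b₄) < a₀ / b₀)
    (h4 : a₀ / b₀ < (a₁ + ω * a₃) / (b₁ + ω * b₃))
    (h5 : a₂ ≥ χ₁ * l / d₃) (h6 : b₁ ≥ χ₂ * k / d₃)
    (h7 : (a₁ - 2 * χ₁ * k / d₃ - ω * a₃) * (b₂ - 2 * χ₂ * l / d₃ - ω * b₄)
      > (a₂ + ω * a₄) * (b₁ + ω * b₃))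
    (ui uo vi vo : ℝ)
    (hui : 0 ≤ ui) (huo : ui ≤ uo) (hvi : 0 ≤ vi) (hvo : vi ≤ vo)
    (hC1 : (a₁ - χ₁ * k / d₃) * uo ≤
      max 0 (a₀ - (ω * a₃ + χ₁ * k / d₃) * ui - (a₂ + ω * a₄) * vi))
    (hC2 : (a₁ - χ₁ * k / d₃) * ui ≥
      max 0 (a₀ - (ω * a₃ + χ₁ * k / d₃) * uo - (a₂ + ω * a₄) * vo))
    (hC3 : (b₂ - χ₂ * l / d₃) * vo ≤
      max 0 (b₀ - (ω * b₄ + χ₂ * l / d₃) * vi - (b₁ + ω * b₃) * ui))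
    (hC4 : (b₂ - χ₂ * l / d₃) * vi ≥
      max 0 (b₀ - (ω * b₄ + χ₂ * l / d₃) * vo - (b₁ + ω * b₃) * uo))
    (ustar vstar : ℝ)
    (hustar : ustar = (a₀ * (b₂ + ω * b₄) - b₀ * (a₂ + ω * a₄))
      / ((b₂ + ω * b₄) * (a₁ + ω * a₃) - (a₂ + ω * a₄) * (b₁ + ω * b₃)))
    (hvstar : vstar = (a₀ * (b₁ + ω * b₃) - b₀ * (a₁ + ω * a₃))
      / ((b₁ + ω * b₃) * (a₂ + ω * a₄) - (a₁ + ω * a₃) * (b₂ + ω * b₄))) :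
    ui = ustar ∧ uo = ustar ∧ vi = vstar ∧ vo = vstar := by
  have e1 : 2 * χ₁ * k / d₃ = 2 * (χ₁ * k / d₃) := by ring
  have e2 : 2 * χ₂ * l / d₃ = 2 * (χ₂ * l / d₃) := by ring
  rw [e1] at h1 h7
  rw [e2] at h2 h7
  set α := χ₁ * k / d₃ with hαd
  set β := χ₂ * l / d₃ with hβd
  have hα : 0 < α := by rw [hαd]; positivity
  have hβ : 0 < β := by rw [hβd]; positivity
  have hA : (0:ℝ) < a₂ + ω * a₄ := by positivity
  have hB : (0:ℝ) < b₁ + ω * b₃ := by positivity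
  have hP : (0:ℝ) < a₁ + ω * a₃ := by positivity
  have hQ : (0:ℝ) < b₂ + ω * b₄ := by positivity
  have hωa₃ : 0 < ω * a₃ := mul_pos hω ha₃
  have hωb₄ : 0 < ω * b₄ := mul_pos hω hb₄
  have hc1 : 0 < a₁ - 2 * α - ω * a₃ := by linarith
  have hc2 : 0 < b₂ - 2 * β - ω * b₄ := by linarith
  have ha : 0 < a₁ - α := by linarith
  have hb : 0 < b₂ - β := by linarith
  have hp : 0 ≤ uo - ui := by linarith
  have hq : 0 ≤ vo - vi := by linarith
  have hC2' : a₀ - (ω * a₃ + α) * uo - (a₂ + ω * a₄) * vo ≤ (a₁ - α) * ui :=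
    le_trans (le_max_right _ _) hC2
  have hC2'' : 0 ≤ (a₁ - α) * ui := le_trans (le_max_left _ _) hC2
  have hC4' : b₀ - (ω * b₄ + β) * vo - (b₁ + ω * b₃) * uo ≤ (b₂ - β) * vi :=
    le_trans (le_max_right _ _) hC4
  have hC4'' : 0 ≤ (b₂ - β) * vi := le_trans (le_max_left _ _) hC4
  -- Step 1: comparison inequalities for the differences
  have hG1 : (a₁ - 2 * α - ω * a₃) * (uo - ui) ≤ (a₂ + ω * a₄) * (vo - vi) := by
    rcases le_or_gt (a₀ - (ω * a₃ + α) * ui - (a₂ + ω * a₄) * vi) 0 with h | h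
    · have h0 : (a₁ - α) * uo ≤ 0 := le_trans hC1 (le_of_eq (max_eq_left h))
      have h0' : (a₁ - α) * (uo - ui) ≤ 0 := by linarith [h0, hC2'']
      have hz : uo - ui = 0 := by
        refine le_antisymm ?_ hp
        by_contra hcon
        push_neg at hcon
        exact absurd (mul_pos ha hcon) (not_lt.mpr h0')
      calc (a₁ - 2 * α - ω * a₃) * (uo - ui) = 0 := by rw [hz]; ring
        _ ≤ (a₂ + ω * a₄) * (vo - vi) := mul_nonneg hA.le hq
    · have h0 : (a₁ - α) * uo ≤ a₀ - (ω * a₃ + α) * ui - (a₂ + ω * a₄) * vi :=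
        le_trans hC1 (le_of_eq (max_eq_right h.le))
      linarith
  have hG2 : (b₂ - 2 * β - ω * b₄) * (vo - vi) ≤ (b₁ + ω * b₃) * (uo - ui) := by
    rcases le_or_gt (b₀ - (ω * b₄ + β) * vi - (b₁ + ω * b₃) * ui) 0 with h | h
    · have h0 : (b₂ - β) * vo ≤ 0 := le_trans hC3 (le_of_eq (max_eq_left h))
      have h0' : (b₂ - β) * (vo - vi) ≤ 0 := by linarith [h0, hC4'']
      have hz : vo - vi = 0 := by
        refine le_antisymm ?_ hq
        by_contra hcon
        push_neg at hcon
        exact absurd (mul_pos hb hcon) (not_lt.mpr h0')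
      calc (b₂ - 2 * β - ω * b₄) * (vo - vi) = 0 := by rw [hz]; ring
        _ ≤ (b₁ + ω * b₃) * (uo - ui) := mul_nonneg hB.le hp
    · have h0 : (b₂ - β) * vo ≤ b₀ - (ω * b₄ + β) * vi - (b₁ + ω * b₃) * ui :=
        le_trans hC3 (le_of_eq (max_eq_right h.le))
      linarith
  -- Step 2: the differences vanish
  have key : ((a₁ - 2 * α - ω * a₃) * (uo - ui)) * ((b₂ - 2 * β - ω * b₄) * (vo - vi))
      ≤ ((a₂ + ω * a₄) * (vo - vi)) * ((b₁ + ω * b₃) * (uo - ui)) :=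
    mul_le_mul hG1 hG2 (mul_nonneg hc2.le hq) (mul_nonneg hA.le hq)
  have key' : ((a₁ - 2 * α - ω * a₃) * (b₂ - 2 * β - ω * b₄)
      - (a₂ + ω * a₄) * (b₁ + ω * b₃)) * ((uo - ui) * (vo - vi)) ≤ 0 := by
    linarith [key]
  have hd7 : 0 < (a₁ - 2 * α - ω * a₃) * (b₂ - 2 * β - ω * b₄)
      - (a₂ + ω * a₄) * (b₁ + ω * b₃) := by linarith [h7]
  have hpq0 : (uo - ui) * (vo - vi) = 0 := by
    refine le_antisymm ?_ (mul_nonneg hp hq)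
    by_contra hcon
    push_neg at hcon
    exact absurd (mul_pos hd7 hcon) (not_lt.mpr key')
  have hu : uo = ui := by
    rcases mul_eq_zero.mp hpq0 with h | h
    · linarith
    · have hAz : (a₂ + ω * a₄) * (vo - vi) = 0 := by rw [h]; ring
      have h0' : (a₁ - 2 * α - ω * a₃) * (uo - ui) ≤ 0 := by linarith [hG1, hAz]
      have : uo - ui ≤ 0 := by
        by_contra hcon
        push_neg at hcon
        exact absurd (mul_pos hc1 hcon) (not_lt.mpr h0')
      linarith
  have hv : vo = vi := by
    rcases mul_eq_zero.mp hpq0 with h | h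
    · have hBz : (b₁ + ω * b₃) * (uo - ui) = 0 := by rw [h]; ring
      have h0' : (b₂ - 2 * β - ω * b₄) * (vo - vi) ≤ 0 := by linarith [hG2, hBz]
      have : vo - vi ≤ 0 := by
        by_contra hcon
        push_neg at hcon
        exact absurd (mul_pos hc2 hcon) (not_lt.mpr h0')
      linarith
    · linarith
  -- Step 3: equalities replacing the inequalities
  rw [hu] at hC1 hC2 hC4
  rw [hv] at hC2 hC3 hC4
  have hE1 : (a₁ - α) * ui = max 0 (a₀ - (ω * a₃ + α) * ui - (a₂ + ω * a₄) * vi) :=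
    le_antisymm hC1 hC2
  have hE2 : (b₂ - β) * vi = max 0 (b₀ - (ω * b₄ + β) * vi - (b₁ + ω * b₃) * ui) :=
    le_antisymm hC3 hC4
  have h3' : (a₂ + ω * a₄) * b₀ < a₀ * (b₂ + ω * b₄) := by
    rw [div_lt_div_iff₀ hQ hb₀] at h3; linarith
  have h4' : a₀ * (b₁ + ω * b₃) < b₀ * (a₁ + ω * a₃) := by
    rw [div_lt_div_iff₀ hb₀ hB] at h4; linarith
  rcases le_or_gt (a₀ - (ω * a₃ + α) * ui - (a₂ + ω * a₄) * vi) 0 with hX | hX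
  · exfalso
    rw [max_eq_left hX] at hE1
    have hui0 : ui = 0 := by
      rcases mul_eq_zero.mp hE1 with h | h
      · exfalso; linarith
      · exact h
    rw [hui0] at hX hE2
    have hXa : a₀ ≤ (a₂ + ω * a₄) * vi := by
      have : (ω * a₃ + α) * (0:ℝ) = 0 := by ring
      linarith [hX, this]
    have hvipos : 0 < vi := by
      by_contra hcon
      push_neg at hcon
      have : (a₂ + ω * a₄) * vi ≤ 0 := mul_nonpos_of_nonneg_of_nonpos hA.le hcon
      linarith
    rcases le_or_gt (b₀ - (ω * b₄ + β) * vi - (b₁ + ω * b₃) * 0) 0 with hY | hY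
    · rw [max_eq_left hY] at hE2
      linarith [mul_pos hb hvipos, hE2]
    · rw [max_eq_right hY.le] at hE2
      have hQvi : (b₂ + ω * b₄) * vi = b₀ := by
        have : (b₁ + ω * b₃) * (0:ℝ) = 0 := by ring
        linarith [hE2, this]
      have e3 : (a₂ + ω * a₄) * ((b₂ + ω * b₄) * vi) = (a₂ + ω * a₄) * b₀ := by
        rw [hQvi]
      have e4 : a₀ * (b₂ + ω * b₄) ≤ (a₂ + ω * a₄) * vi * (b₂ + ω * b₄) :=
        mul_le_mul_of_nonneg_right hXa hQ.le
      linarith [e3, e4, h3']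
  · rw [max_eq_right hX.le] at hE1
    have eq1 : (a₁ + ω * a₃) * ui + (a₂ + ω * a₄) * vi = a₀ := by linarith [hE1]
    rcases le_or_gt (b₀ - (ω * b₄ + β) * vi - (b₁ + ω * b₃) * ui) 0 with hY | hY
    · exfalso
      rw [max_eq_left hY] at hE2
      have hvi0 : vi = 0 := by
        rcases mul_eq_zero.mp hE2 with h | h
        · exfalso; linarith
        · exact h
      rw [hvi0] at hY eq1
      have hYb : b₀ ≤ (b₁ + ω * b₃) * ui := by
        have : (ω * b₄ + β) * (0:ℝ) = 0 := by ring
        linarith [hY, this]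
      have e3 : (b₁ + ω * b₃) * ((a₁ + ω * a₃) * ui + (a₂ + ω * a₄) * 0)
          = (b₁ + ω * b₃) * a₀ := by rw [eq1]
      have e4 : b₀ * (a₁ + ω * a₃) ≤ (b₁ + ω * b₃) * ui * (a₁ + ω * a₃) :=
        mul_le_mul_of_nonneg_right hYb hP.le
      have e3' : (b₁ + ω * b₃) * ((a₁ + ω * a₃) * ui) = (b₁ + ω * b₃) * a₀ := by
        linarith [e3]
      linarith [e3', e4, h4']
    · rw [max_eq_right hY.le] at hE2
      have eq2 : (b₁ + ω * b₃) * ui + (b₂ + ω * b₄) * vi = b₀ := by linarith [hE2]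
      have hPc : a₁ - 2 * α - ω * a₃ < a₁ + ω * a₃ := by linarith
      have hQc : b₂ - 2 * β - ω * b₄ < b₂ + ω * b₄ := by linarith
      have hm : (a₁ - 2 * α - ω * a₃) * (b₂ - 2 * β - ω * b₄)
          < (a₁ + ω * a₃) * (b₂ + ω * b₄) :=
        mul_lt_mul hPc hQc.le hc2 hP.le
      have hD : 0 < (b₂ + ω * b₄) * (a₁ + ω * a₃) - (a₂ + ω * a₄) * (b₁ + ω * b₃) := by
        linarith [h7, hm]
      have huis : ui = ustar := by
        rw [hustar, eq_comm, div_eq_iff (ne_of_gt hD), eq_comm]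
        linear_combination (b₂ + ω * b₄) * eq1 - (a₂ + ω * a₄) * eq2
      have hD' : (b₁ + ω * b₃) * (a₂ + ω * a₄) - (a₁ + ω * a₃) * (b₂ + ω * b₄) < 0 := by
        linarith [hD]
      have hvis : vi = vstar := by
        rw [hvstar, eq_comm, div_eq_iff (ne_of_lt hD'), eq_comm]
        linear_combination (b₁ + ω * b₃) * eq1 - (a₁ + ω * a₃) * eq2
      exact ⟨huis, hu.trans huis, hvis, hv.trans hvis⟩
end

section
/- Fix positive reals a₀, b₀, χ₁, χ₂, d₃, k, l, ω and reals a₁, a₂, a₃, a₄, b₁, b₂, b₃, b₄. Assume: a₄ ≥ 0; a₂ ≥ χ₁l/d₃; a₁ > χ₁k/d₃ + ω(a₃)₋; b₂ > 2χ₂l/d₃ + ω|b₄|; b₁ ≤ χ₂k/d₃; b₀ ≥ a₀·(b₂ + ω·b₄)/(a₂ + ω·a₄); and (a₁ − χ₁k/d₃ − ω(a₃)₋)·(b₂ − 2χ₂l/d₃ − ω|b₄|)·b₀ > (b₂ − χ₂l/d₃ − ω(b₄)₋)·(ω(b₃)₊ + χ₂k/d₃)·a₀ + (χ₂k/d₃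 − b₁ + ω(b₃)₋)·(ω(b₄)₊ + χ₂l/d₃)·a₀. Let u̲, ū, v̲, v̄ be nonnegative reals with u̲ ≤ ū and v̲ ≤ v̄ satisfying: (E1) (a₁ − χ₁k/d₃)·ū ≤ max(0, a₀ − (a₂ + ω·a₄)·v̲ + ω(a₃)₋·ū); (E2') (b₂ − χ₂l/d₃)·v̄ ≤ max(0, b₀ + (χ₂k/d₃ − b₁ + ω(b₃)₋)·ū − (ω(b₄)₊ + χ₂l/d₃)·v̲ + ω(b₄)₋·v̄); (E3') (b₂ − χ₂l/d₃)·v̲ ≥ max(0, b₀ − (χ₂k/d₃ + ω(b₃)₊)·ū − (ω(b₄)₊ + χ₂l/d₃)·v̄ + ω(b₄)₋·v̲). Then ū = 0. -/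
theorem helper_stmt12 (a₀ b₀ A E P Q R S uo vi vo : ℝ)
    (ha₀ : 0 < a₀) (hb₀ : 0 < b₀) (hA : 0 < A) (hE : 0 < E)
    (hQ : 0 < Q) (hPQ : Q < P) (hR : 0 < R) (hS : 0 ≤ S)
    (h6 : a₀ * (P + Q) ≤ E * b₀)
    (h7 : (P * R + Q * S) * a₀ < A * (P - Q) * b₀)
    (huo : 0 ≤ uo) (hvi : 0 ≤ vi) (hvo : 0 ≤ vo)
    (C1 : A * uo + E * vi ≤ a₀)
    (C2 : b₀ ≤ P * vi + R * uo + Q * vo)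
    (C3 : P * vo + Q * vi ≤ b₀ + S * uo) :
    uo = 0 := by
  have hP : 0 < P := hQ.trans hPQ
  have hB : 0 < P - Q := sub_pos.2 hPQ
  have h1 : (P - Q) * b₀ * (A * uo + E * vi) ≤ (P - Q) * b₀ * a₀ :=
    mul_le_mul_of_nonneg_left C1 (mul_pos hB hb₀).le
  have h2 : a₀ * P * b₀ ≤ a₀ * P * (P * vi + R * uo + Q * vo) :=
    mul_le_mul_of_nonneg_left C2 (mul_pos ha₀ hP).le
  have h3 : a₀ * Q * (P * vo + Q * vi) ≤ a₀ * Q * (b₀ + S * uo) :=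
    mul_le_mul_of_nonneg_left C3 (mul_pos ha₀ hQ).le
  have h4 : 0 ≤ (P - Q) * (E * b₀ - a₀ * (P + Q)) * vi :=
    mul_nonneg (mul_nonneg hB.le (by linarith)) hvi
  have hkey : (A * (P - Q) * b₀ - (P * R + Q * S) * a₀) * uo ≤ 0 := by nlinarith [h1, h2, h3, h4]
  have hcoef : 0 < A * (P - Q) * b₀ - (P * R + Q * S) * a₀ := by linarith
  have : uo ≤ 0 := by nlinarith
  linarith

set_option maxHeartbeats 1000000 in
/-- Algebraic content of Step 1 in the proof of Theorem 1.5 (competitive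
exclusion: extinction of u) in the case b₁ ≤ χ₂k/d₃. -/
theorem stmt_12 (a₀ b₀ χ₁ χ₂ d₃ k l ω : ℝ)
    (ha₀ : 0 < a₀) (hb₀ : 0 < b₀) (hχ₁ : 0 < χ₁) (hχ₂ : 0 < χ₂)
    (hd₃ : 0 < d₃) (hk : 0 < k) (hl : 0 < l) (hω : 0 < ω)
    (a₁ a₂ a₃ a₄ b₁ b₂ b₃ b₄ : ℝ)
    (h1 : a₄ ≥ 0)
    (h2 : a₂ ≥ χ₁ * l / d₃)
    (h3 : a₁ > χ₁ * k / d₃ + ω * max (-a₃) 0)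
    (h4 : b₂ > 2 * χ₂ * l / d₃ + ω * |b₄|)
    (h5 : b₁ ≤ χ₂ * k / d₃)
    (h6 : b₀ ≥ a₀ * (b₂ + ω * b₄) / (a₂ + ω * a₄))
    (h7 : (a₁ - χ₁ * k / d₃ - ω * max (-a₃) 0) * (b₂ - 2 * χ₂ * l / d₃ - ω * |b₄|) * b₀
      > (b₂ - χ₂ * l / d₃ - ω * max (-b₄) 0) * (ω * max b₃ 0 + χ₂ * k / d₃) * a₀
        + (χ₂ * k / d₃ - b₁ + ω * max (-b₃) 0) * (ω * max b₄ 0 + χ₂ * l / d₃) * a₀)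
    (ui uo vi vo : ℝ)
    (hui : 0 ≤ ui) (huo : ui ≤ uo) (hvi : 0 ≤ vi) (hvo : vi ≤ vo)
    (hE1 : (a₁ - χ₁ * k / d₃) * uo ≤
      max 0 (a₀ - (a₂ + ω * a₄) * vi + ω * max (-a₃) 0 * uo))
    (hE2' : (b₂ - χ₂ * l / d₃) * vo ≤
      max 0 (b₀ + (χ₂ * k / d₃ - b₁ + ω * max (-b₃) 0) * uo
        - (ω * max b₄ 0 + χ₂ * l / d₃) * vi + ω * max (-b₄) 0 * vo))
    (hE3' : (b₂ - χ₂ * l / d₃) * vi ≥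
      max 0 (b₀ - (χ₂ * k / d₃ + ω * max b₃ 0) * uo
        - (ω * max b₄ 0 + χ₂ * l / d₃) * vo + ω * max (-b₄) 0 * vi)) :
    uo = 0 := by
  have huo0 : 0 ≤ uo := hui.trans huo
  have hvo0 : 0 ≤ vo := hvi.trans hvo
  have hb4abs : |b₄| = max b₄ 0 + max (-b₄) 0 := by
    rcases le_total 0 b₄ with h | h
    · rw [abs_of_nonneg h, max_eq_left h, max_eq_right (neg_nonpos.2 h)]; ring
    · rw [abs_of_nonpos h, max_eq_right h, max_eq_left (neg_nonneg.2 h)]; ring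
  have hb4eq : max b₄ 0 - max (-b₄) 0 = b₄ := by
    rcases le_total 0 b₄ with h | h
    · rw [max_eq_left h, max_eq_right (neg_nonpos.2 h)]; ring
    · rw [max_eq_right h, max_eq_left (neg_nonneg.2 h)]; ring
  have etwo : 2 * χ₂ * l / d₃ = χ₂ * l / d₃ + χ₂ * l / d₃ := by ring
  rw [hb4abs, etwo] at h4 h7
  set K1 := χ₁ * k / d₃ with hK1def
  set L1 := χ₁ * l / d₃ with hL1def
  set K2 := χ₂ * k / d₃ with hK2def
  set L2 := χ₂ * l / d₃ with hL2def
  have ha3n : 0 ≤ max (-a₃) 0 := le_max_right _ _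
  have hb3p : 0 ≤ max b₃ 0 := le_max_right _ _
  have hb3n : 0 ≤ max (-b₃) 0 := le_max_right _ _
  have hb4p : 0 ≤ max b₄ 0 := le_max_right _ _
  have hb4n : 0 ≤ max (-b₄) 0 := le_max_right _ _
  have hL1 : 0 < L1 := div_pos (mul_pos hχ₁ hl) hd₃
  have hK2 : 0 < K2 := div_pos (mul_pos hχ₂ hk) hd₃
  have hL2 : 0 < L2 := div_pos (mul_pos hχ₂ hl) hd₃
  have hE : 0 < a₂ + ω * a₄ := by
    have := mul_nonneg hω.le h1; linarith
  have hA : 0 < a₁ - K1 - ω * max (-a₃) 0 := by linarith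
  have hQpos : 0 < ω * max b₄ 0 + L2 := by
    have := mul_nonneg hω.le hb4p; linarith
  have hPQ : ω * max b₄ 0 + L2 < b₂ - L2 - ω * max (-b₄) 0 := by linarith
  have hRpos : 0 < K2 + ω * max b₃ 0 := by
    have := mul_nonneg hω.le hb3p; linarith
  have hSnn : 0 ≤ K2 - b₁ + ω * max (-b₃) 0 := by
    have := mul_nonneg hω.le hb3n; linarith
  -- C1 (or immediate conclusion)
  rcases le_max_iff.mp hE1 with hc1 | hc1
  · have hA' : 0 < a₁ - K1 := by
      have := mul_nonneg hω.le ha3n; linarith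
    have : uo ≤ 0 := by nlinarith [hc1, hA', huo0]
    linarith
  have C1 : (a₁ - K1 - ω * max (-a₃) 0) * uo + (a₂ + ω * a₄) * vi ≤ a₀ := by
    linarith [hc1]
  -- C2
  have C2 : b₀ ≤ (b₂ - L2 - ω * max (-b₄) 0) * vi
      + (K2 + ω * max b₃ 0) * uo + (ω * max b₄ 0 + L2) * vo := by
    have h := (le_max_right 0 _).trans hE3'
    linarith [h]
  -- C3
  have C3 : (b₂ - L2 - ω * max (-b₄) 0) * vo + (ω * max b₄ 0 + L2) * vi
      ≤ b₀ + (K2 - b₁ + ω * max (-b₃) 0) * uo := by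
    rcases le_max_iff.mp hE2' with hc2 | hc2
    · have hb2L : 0 < b₂ - L2 := by
        have := mul_nonneg hω.le (by linarith : (0:ℝ) ≤ max b₄ 0 + max (-b₄) 0); linarith
      have hvoz : vo ≤ 0 := by nlinarith [hc2, hb2L, hvo0]
      have hvo' : vo = 0 := le_antisymm hvoz hvo0
      have hvi' : vi = 0 := le_antisymm (hvo' ▸ hvo) hvi
      rw [hvo', hvi']
      have := mul_nonneg hSnn huo0
      linarith
    · linarith [hc2]
  -- h6 rephrased
  have h6' : a₀ * ((b₂ - L2 - ω * max (-b₄) 0) + (ω * max b₄ 0 + L2))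
      ≤ (a₂ + ω * a₄) * b₀ := by
    have h6'' : a₀ * (b₂ + ω * b₄) ≤ b₀ * (a₂ + ω * a₄) := (div_le_iff₀ hE).mp h6
    have hmul : a₀ * ω * (max b₄ 0 - max (-b₄) 0) = a₀ * ω * b₄ := by rw [hb4eq]
    linarith [h6'', hmul]
  -- h7 rephrased
  have h7' : ((b₂ - L2 - ω * max (-b₄) 0) * (K2 + ω * max b₃ 0)
      + (ω * max b₄ 0 + L2) * (K2 - b₁ + ω * max (-b₃) 0)) * a₀
      < (a₁ - K1 - ω * max (-a₃) 0)
        * ((b₂ - L2 - ω * max (-b₄) 0) - (ω * max b₄ 0 + L2)) * b₀ := by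
    linarith [h7]
  exact helper_stmt12 a₀ b₀ _ _ _ _ _ _ uo vi vo ha₀ hb₀ hA hE hQpos hPQ hRpos hSnn h6' h7'
    huo0 hvi hvo0 C1 C2 C3
end

section
/- Fix positive reals b₀, χ₂, d₃, l, ω and reals b₂, b₄ with b₂ > 2χ₂l/d₃ + ω|b₄|. Let v̲, v̄ be nonnegative reals with v̲ ≤ v̄ satisfying: (b₂ − χ₂l/d₃)·v̄ ≤ max(0, b₀ − (ω(b₄)₊ + χ₂l/d₃)·v̲ + ω(b₄)₋·v̄) and (b₂ − χ₂l/d₃)·v̲ ≥ max(0, b₀ − (ω(b₄)₊ + χ₂l/d₃)·v̄ + ω(b₄)₋·v̲). Then v̲ = v̄ = b₀/(b₂ + ω·b₄). -/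
/-- Step 2 of the proof of Theorem 1.5: the surviving species reaches its
carrying capacity b₀/(b₂ + ω b₄). -/
theorem stmt_13 (b₀ χ₂ d₃ l ω : ℝ)
    (hb₀ : 0 < b₀) (hχ₂ : 0 < χ₂) (hd₃ : 0 < d₃) (hl : 0 < l) (hω : 0 < ω)
    (b₂ b₄ : ℝ)
    (h : b₂ > 2 * χ₂ * l / d₃ + ω * |b₄|)
    (vi vo : ℝ) (hvi : 0 ≤ vi) (hvo : vi ≤ vo)
    (h1 : (b₂ - χ₂ * l / d₃) * vo ≤
      max 0 (b₀ - (ω * max b₄ 0 + χ₂ * l / d₃) * vi + ω * max (-b₄) 0 * vo))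
    (h2 : (b₂ - χ₂ * l / d₃) * vi ≥
      max 0 (b₀ - (ω * max b₄ 0 + χ₂ * l / d₃) * vo + ω * max (-b₄) 0 * vi)) :
    vi = b₀ / (b₂ + ω * b₄) ∧ vo = b₀ / (b₂ + ω * b₄) := by
  have hk : 0 < χ₂ * l / d₃ := by positivity
  have habs : max b₄ 0 + max (-b₄) 0 = |b₄| := by
    rcases le_total b₄ 0 with hb | hb
    · rw [abs_of_nonpos hb, max_eq_right hb, max_eq_left (by linarith)]; ring
    · rw [abs_of_nonneg hb, max_eq_left hb, max_eq_right (by linarith)]; ring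
  have hdiff : max b₄ 0 - max (-b₄) 0 = b₄ := by
    rcases le_total b₄ 0 with hb | hb
    · rw [max_eq_right hb, max_eq_left (by linarith)]; ring
    · rw [max_eq_left hb, max_eq_right (by linarith)]; ring
  have habs_nn : 0 ≤ |b₄| := abs_nonneg _
  have h2' : (b₂ - χ₂ * l / d₃) * vi ≥
      b₀ - (ω * max b₄ 0 + χ₂ * l / d₃) * vo + ω * max (-b₄) 0 * vi :=
    le_trans (le_max_right _ _) h2
  have h2k : 2 * χ₂ * l / d₃ = 2 * (χ₂ * l / d₃) := by ring
  have hbk : χ₂ * l / d₃ < b₂ := by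
    have := mul_nonneg hω.le habs_nn
    linarith [h2k]
  have hA : (b₂ - χ₂ * l / d₃) * vo ≤
      b₀ - (ω * max b₄ 0 + χ₂ * l / d₃) * vi + ω * max (-b₄) 0 * vo := by
    rcases le_or_gt (b₀ - (ω * max b₄ 0 + χ₂ * l / d₃) * vi + ω * max (-b₄) 0 * vo) 0
      with hA0 | hA0
    · exfalso
      have h1' : (b₂ - χ₂ * l / d₃) * vo ≤ 0 := by
        rw [max_eq_left hA0] at h1; exact h1
      have hvo0 : vo = 0 := by
        by_contra hne
        have hvp : 0 < vo := lt_of_le_of_ne (hvi.trans hvo) (Ne.symm hne)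
        nlinarith [mul_pos (sub_pos.2 hbk) hvp]
      have hvi0 : vi = 0 := le_antisymm (hvo0 ▸ hvo) hvi
      rw [hvi0, hvo0] at h2'
      nlinarith
    · calc (b₂ - χ₂ * l / d₃) * vo ≤ _ := h1
        _ = _ := max_eq_right hA0.le
  -- vi = vo
  have hc : 0 < b₂ - 2 * (χ₂ * l / d₃) - ω * (max b₄ 0 + max (-b₄) 0) := by
    rw [habs]; linarith [h2k]
  have heq : vi = vo := by
    by_contra hne
    have hlt : vi < vo := lt_of_le_of_ne hvo hne
    nlinarith [mul_pos hc (sub_pos.2 hlt)]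
  subst heq
  have hpos : 0 < b₂ + ω * b₄ := by
    have : -(ω * |b₄|) ≤ ω * b₄ := by
      have := mul_le_mul_of_nonneg_left (neg_abs_le b₄) hω.le
      linarith [this]
    nlinarith
  have hd2 : ω * (max b₄ 0 - max (-b₄) 0) * vi = ω * b₄ * vi := by rw [hdiff]
  have hval : (b₂ + ω * b₄) * vi = b₀ := by
    have hle : (b₂ + ω * b₄) * vi ≤ b₀ := by nlinarith [hd2, hA]
    have hge : b₀ ≤ (b₂ + ω * b₄) * vi := by nlinarith [hd2, h2']
    linarith
  have : vi = b₀ / (b₂ + ω * b₄) := by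
    field_simp
    linarith [hval]
  exact ⟨this, this⟩
end

section
/- Fix positive reals a₀, χ₁, k, d₃, ω and reals a₁, a₃ with a₁ > 2χ₁k/d₃ + ω|a₃|. Let u̲, ū be nonnegative reals with u̲ ≤ ū satisfying: (a₁ − χ₁k/d₃)·ū ≤ max(0, a₀ − (ω(a₃)₊ + χ₁k/d₃)·u̲ + ω(a₃)₋·ū) and (a₁ − χ₁k/d₃)·u̲ ≥ max(0, a₀ − (ω(a₃)₊ + χ₁k/d₃)·ū + ω(a₃)₋·u̲). Then u̲ = ū = a₀/(a₁ + ω·a₃). -/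
/-- Sub-claim of Case II of the proof of Lemma 3.3: in the absence of the
second species, the comparison inequalities force the first species to the
single-species carrying capacity a₀/(a₁ + ω a₃). -/
theorem stmt_15 (a₀ χ₁ k d₃ ω : ℝ)
    (ha₀ : 0 < a₀) (hχ₁ : 0 < χ₁) (hk : 0 < k) (hd₃ : 0 < d₃) (hω : 0 < ω)
    (a₁ a₃ : ℝ)
    (h : a₁ > 2 * χ₁ * k / d₃ + ω * |a₃|)
    (ui uo : ℝ) (hui : 0 ≤ ui) (huo : ui ≤ uo)
    (h1 : (a₁ - χ₁ * k / d₃) * uo ≤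
      max 0 (a₀ - (ω * max a₃ 0 + χ₁ * k / d₃) * ui + ω * max (-a₃) 0 * uo))
    (h2 : (a₁ - χ₁ * k / d₃) * ui ≥
      max 0 (a₀ - (ω * max a₃ 0 + χ₁ * k / d₃) * uo + ω * max (-a₃) 0 * ui)) :
    ui = a₀ / (a₁ + ω * a₃) ∧ uo = a₀ / (a₁ + ω * a₃) := by
  have hc : 0 < χ₁ * k / d₃ := by positivity
  have h2c : 2 * χ₁ * k / d₃ = 2 * (χ₁ * k / d₃) := by ring
  have hsum : max a₃ 0 + max (-a₃) 0 = |a₃| := by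
    rcases le_total 0 a₃ with h' | h'
    · rw [max_eq_left h', max_eq_right (neg_nonpos.mpr h'), abs_of_nonneg h']; ring
    · rw [max_eq_right h', max_eq_left (neg_nonneg.mpr h'), abs_of_nonpos h']; ring
  have hdiff : max a₃ 0 - max (-a₃) 0 = a₃ := by
    rcases le_total 0 a₃ with h' | h'
    · rw [max_eq_left h', max_eq_right (neg_nonpos.mpr h')]; ring
    · rw [max_eq_right h', max_eq_left (neg_nonneg.mpr h')]; ring
  have hωsum : ω * max a₃ 0 + ω * max (-a₃) 0 = ω * |a₃| := by linear_combination ω * hsum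
  have hωdiff : ω * max a₃ 0 - ω * max (-a₃) 0 = ω * a₃ := by linear_combination ω * hdiff
  have hp : 0 ≤ max a₃ 0 := le_max_right _ _
  have hn : 0 ≤ max (-a₃) 0 := le_max_right _ _
  have hωp : 0 ≤ ω * max a₃ 0 := mul_nonneg hω.le hp
  have hωn : 0 ≤ ω * max (-a₃) 0 := mul_nonneg hω.le hn
  have hac : 0 < a₁ - χ₁ * k / d₃ := by
    nlinarith [abs_nonneg a₃]
  -- (ii) always holds
  have hii : (a₁ - χ₁ * k / d₃) * ui ≥
      a₀ - (ω * max a₃ 0 + χ₁ * k / d₃) * uo + ω * max (-a₃) 0 * ui :=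
    le_trans (le_max_right _ _) h2
  have huo0 : 0 ≤ uo := le_trans hui huo
  rcases le_or_gt (a₀ - (ω * max a₃ 0 + χ₁ * k / d₃) * ui + ω * max (-a₃) 0 * uo) 0
      with hA | hA
  · exfalso
    have h1' : (a₁ - χ₁ * k / d₃) * uo ≤ 0 := by
      rwa [max_eq_left hA] at h1
    have huo_eq : uo = 0 := by
      by_contra hcon
      have : 0 < uo := lt_of_le_of_ne huo0 (Ne.symm hcon)
      nlinarith [mul_pos hac this]
    have hui_eq : ui = 0 := le_antisymm (huo_eq ▸ huo) hui
    rw [huo_eq, hui_eq] at hii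
    simp at hii
    linarith
  · have h1' : (a₁ - χ₁ * k / d₃) * uo ≤
        a₀ - (ω * max a₃ 0 + χ₁ * k / d₃) * ui + ω * max (-a₃) 0 * uo := by
      rwa [max_eq_right hA.le] at h1
    have hK : 0 < a₁ - 2 * (χ₁ * k / d₃) - ω * max a₃ 0 - ω * max (-a₃) 0 := by
      linarith [hωsum, h2c]
    have heq : ui = uo := by
      by_contra hcon
      have hlt : 0 < uo - ui := sub_pos.mpr (lt_of_le_of_ne huo hcon)
      nlinarith [mul_pos hK hlt]
    have hcoef : 0 < a₁ + ω * a₃ := by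
      nlinarith [neg_abs_le a₃, abs_nonneg a₃]
    rw [heq] at h1' hii
    have key : (ω * max a₃ 0 - ω * max (-a₃) 0) * uo = ω * a₃ * uo := by
      linear_combination uo * hωdiff
    have heq2 : (a₁ - χ₁ * k / d₃) * uo =
        a₀ - (ω * max a₃ 0 + χ₁ * k / d₃) * uo + ω * max (-a₃) 0 * uo :=
      le_antisymm h1' hii
    have hval : (a₁ + ω * a₃) * uo = a₀ := by linear_combination heq2 - key
    have hres : uo = a₀ / (a₁ + ω * a₃) := by
      rw [eq_div_iff (ne_of_gt hcoef)]
      linear_combination hval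
    exact ⟨heq ▸ hres, hres⟩
end

section
/- Fix positive reals a₀, b₀, χ₁, χ₂, d₃, k, l, ω and reals a₁, a₂, a₃, a₄, b₁, b₂, b₃, b₄ with a₁ > χ₁k/d₃ and b₂ > χ₂l/d₃. Let u̲, ū, v̲, v̄ be nonnegative reals with u̲ ≤ ū and v̲ ≤ v̄ satisfying the coexistence comparison inequalities (C1)–(C4) (given in the context). Then (ū − u̲)·(a₁ − 2χ₁k/d₃ − ω|a₃|) ≤ (|a₂| + ω|a₄| + 2lχ₁/d₃)·(v̄ − v̲) and (v̄ − v̲)·(b₂ − 2χ₂l/d₃ − ω|b₄|) ≤ (|b₁| + ω|b₃| + 2kχ₂/d₃)·(ū − u̲). -/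
private lemma stmt_16_aux (A B Pp Pm c a₁ a₀ ui uo vi vo : ℝ)
    (hA : 0 ≤ A) (hB : 0 ≤ B) (hPp : 0 ≤ Pp) (hPm : 0 ≤ Pm)
    (huo : ui ≤ uo) (hvo : vi ≤ vo)
    (h1 : (a₁ - c) * uo ≤ max 0 (a₀ - A * ui + B * uo - Pp * vi + Pm * vo))
    (h2 : max 0 (a₀ - A * uo + B * ui - Pp * vo + Pm * vi) ≤ (a₁ - c) * ui) :
    (uo - ui) * (a₁ - c - A - B) ≤ (Pp + Pm) * (vo - vi) := by
  set X₁ := a₀ - A * ui + B * uo - Pp * vi + Pm * vo with hX₁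
  set X₂ := a₀ - A * uo + B * ui - Pp * vo + Pm * vi with hX₂
  have t1 : 0 ≤ A * (uo - ui) := mul_nonneg hA (by linarith)
  have t2 : 0 ≤ B * (uo - ui) := mul_nonneg hB (by linarith)
  have t3 : 0 ≤ Pp * (vo - vi) := mul_nonneg hPp (by linarith)
  have t4 : 0 ≤ Pm * (vo - vi) := mul_nonneg hPm (by linarith)
  have hdiff : X₂ ≤ X₁ := by rw [hX₁, hX₂]; nlinarith
  have h3 : max 0 X₁ ≤ max 0 X₂ + (X₁ - X₂) := by
    apply max_le
    · linarith [le_max_left 0 X₂]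
    · linarith [le_max_right 0 X₂]
  have key : (a₁ - c) * uo - (a₁ - c) * ui ≤ X₁ - X₂ := by linarith
  rw [hX₁, hX₂] at key
  nlinarith [key]

/-- Difference inequalities derived in the proof of Theorem 1.2 from
Lemmas 3.1, 3.2 and 3.3. -/
theorem stmt_16 (a₀ b₀ χ₁ χ₂ d₃ k l ω : ℝ)
    (ha₀ : 0 < a₀) (hb₀ : 0 < b₀) (hχ₁ : 0 < χ₁) (hχ₂ : 0 < χ₂)
    (hd₃ : 0 < d₃) (hk : 0 < k) (hl : 0 < l) (hω : 0 < ω)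
    (a₁ a₂ a₃ a₄ b₁ b₂ b₃ b₄ : ℝ)
    (ha₁ : a₁ > χ₁ * k / d₃) (hb₂ : b₂ > χ₂ * l / d₃)
    (Pp Pm Qp Qm : ℝ)
    (hPp : Pp = max a₂ 0 + ω * max a₄ 0 + l * χ₁ / d₃)
    (hPm : Pm = max (-a₂) 0 + ω * max (-a₄) 0 + l * χ₁ / d₃)
    (hQp : Qp = max b₁ 0 + ω * max b₃ 0 + k * χ₂ / d₃)
    (hQm : Qm = max (-b₁) 0 + ω * max (-b₃) 0 + k * χ₂ / d₃)
    (ui uo vi vo : ℝ)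
    (hui : 0 ≤ ui) (huo : ui ≤ uo) (hvi : 0 ≤ vi) (hvo : vi ≤ vo)
    (hC1 : (a₁ - χ₁ * k / d₃) * uo ≤
      max 0 (a₀ - (ω * max a₃ 0 + χ₁ * k / d₃) * ui + ω * max (-a₃) 0 * uo
        - Pp * vi + Pm * vo))
    (hC2 : (a₁ - χ₁ * k / d₃) * ui ≥
      max 0 (a₀ - (ω * max a₃ 0 + χ₁ * k / d₃) * uo + ω * max (-a₃) 0 * ui
        - Pp * vo + Pm * vi))
    (hC3 : (b₂ - χ₂ * l / d₃) * vo ≤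
      max 0 (b₀ - (ω * max b₄ 0 + χ₂ * l / d₃) * vi + ω * max (-b₄) 0 * vo
        - Qp * ui + Qm * uo))
    (hC4 : (b₂ - χ₂ * l / d₃) * vi ≥
      max 0 (b₀ - (ω * max b₄ 0 + χ₂ * l / d₃) * vo + ω * max (-b₄) 0 * vi
        - Qp * uo + Qm * ui)) :
    (uo - ui) * (a₁ - 2 * χ₁ * k / d₃ - ω * |a₃|)
      ≤ (|a₂| + ω * |a₄| + 2 * l * χ₁ / d₃) * (vo - vi)
    ∧
    (vo - vi) * (b₂ - 2 * χ₂ * l / d₃ - ω * |b₄|)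
      ≤ (|b₁| + ω * |b₃| + 2 * k * χ₂ / d₃) * (uo - ui) := by
  have hc₁ : 0 < χ₁ * k / d₃ := by positivity
  have hc₂ : 0 < χ₂ * l / d₃ := by positivity
  have hPp' : 0 ≤ Pp := by rw [hPp]; positivity
  have hPm' : 0 ≤ Pm := by rw [hPm]; positivity
  have hQp' : 0 ≤ Qp := by rw [hQp]; positivity
  have hQm' : 0 ≤ Qm := by rw [hQm]; positivity
  have H1 := stmt_16_aux (ω * max a₃ 0 + χ₁ * k / d₃) (ω * max (-a₃) 0) Pp Pm
    (χ₁ * k / d₃) a₁ a₀ ui uo vi vo (by positivity) (by positivity) hPp' hPm'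
    huo hvo hC1 hC2
  have H2 := stmt_16_aux (ω * max b₄ 0 + χ₂ * l / d₃) (ω * max (-b₄) 0) Qp Qm
    (χ₂ * l / d₃) b₂ b₀ vi vo ui uo (by positivity) (by positivity) hQp' hQm'
    hvo huo hC3 hC4
  have e2 : max a₂ 0 + max (-a₂) 0 = |a₂| := max_zero_add_max_neg_zero_eq_abs_self a₂
  have e3 : max a₃ 0 + max (-a₃) 0 = |a₃| := max_zero_add_max_neg_zero_eq_abs_self a₃
  have e4 : max a₄ 0 + max (-a₄) 0 = |a₄| := max_zero_add_max_neg_zero_eq_abs_self a₄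
  have f1 : max b₁ 0 + max (-b₁) 0 = |b₁| := max_zero_add_max_neg_zero_eq_abs_self b₁
  have f3 : max b₃ 0 + max (-b₃) 0 = |b₃| := max_zero_add_max_neg_zero_eq_abs_self b₃
  have f4 : max b₄ 0 + max (-b₄) 0 = |b₄| := max_zero_add_max_neg_zero_eq_abs_self b₄
  subst hPp hPm hQp hQm
  constructor
  · have lhs_eq : (uo - ui) * (a₁ - 2 * χ₁ * k / d₃ - ω * |a₃|)
        = (uo - ui) * (a₁ - χ₁ * k / d₃ - (ω * max a₃ 0 + χ₁ * k / d₃)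
            - ω * max (-a₃) 0) := by rw [← e3]; ring
    have rhs_eq : (|a₂| + ω * |a₄| + 2 * l * χ₁ / d₃) * (vo - vi)
        = ((max a₂ 0 + ω * max a₄ 0 + l * χ₁ / d₃)
            + (max (-a₂) 0 + ω * max (-a₄) 0 + l * χ₁ / d₃)) * (vo - vi) := by
      rw [← e2, ← e4]; ring
    rw [lhs_eq, rhs_eq]; exact H1
  · have lhs_eq : (vo - vi) * (b₂ - 2 * χ₂ * l / d₃ - ω * |b₄|)
        = (vo - vi) * (b₂ - χ₂ * l / d₃ - (ω * max b₄ 0 + χ₂ * l / d₃)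
            - ω * max (-b₄) 0) := by rw [← f4]; ring
    have rhs_eq : (|b₁| + ω * |b₃| + 2 * k * χ₂ / d₃) * (uo - ui)
        = ((max b₁ 0 + ω * max b₃ 0 + k * χ₂ / d₃)
            + (max (-b₁) 0 + ω * max (-b₃) 0 + k * χ₂ / d₃)) * (uo - ui) := by
      rw [← f1, ← f3]; ring
    rw [lhs_eq, rhs_eq]; exact H2
end
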